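/- arXiv:1404.5281 — 13 statements merged into one kernel-verified Lean document; each statement's English description precedes it below -/
import Mathlib

section
/- Let n ∈ ℕ, c > 0, K > 0, ε₁ ∈ (0,1), and λ₀ ∈ ℂ with |λ₀| = 1. Suppose for each real ε ∈ (0,ε₁) we are given a unitary matrix U(ε) on ℂⁿ, unit vectors V⁺(ε), V⁻(ε), and complex numbers λ⁺(ε), λ⁻(ε) such that U(ε)·V^±(ε) = λ^±(ε)·V^±(ε) and |λ^±(ε) − λ₀·e^{±ic√ε}| ≤ K·ε. Suppose also there are orthonormal vectors V₀⁺, V₀⁻ ∈ ℂⁿ with ‖V^±(ε) − V₀^±‖ ≤ K·√ε for all ε ∈ (0,ε₁). Define ℓ₀ = (V₀⁺ + V₀⁻)/√2 and 𝔯₀ = (V₀⁺ − V₀⁻)/√2, and for each ε set m(ε) = ⌊π/(2c√ε)⌋. Then there exists K′ > 0 such that for all ε ∈ (0,ε₁): |⟨𝔯₀, U(ε)^{m(ε)} ℓ₀⟩| ≥ 1 − K′·√ε. (Theorem 4.13: the time step operator iterated ⌊π√N/(2c)⌋ times, with ε = 1/N, exchanges the Left and Right active eigenvectors almost completely, to within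 O(√ε).) -/
/-!
Since `U(ε)` is unitary, the eigenvalues `λ^±(ε)` have modulus one, so `(λ^±)^m` differs from
`(λ₀ e^{±ic√ε})^m = λ₀^m e^{±imc√ε}` by at most `m·Kε = O(√ε)`. The choice of `m` puts `mc√ε`
within `c√ε` of `π/2`, hence `(λ^±)^m = ±i λ₀^m + O(√ε)`. As `ℓ₀ = (V⁺ + V⁻)/√2 + O(√ε)` and
`U^m` is an isometry, `U^m ℓ₀ = i λ₀^m (V⁺ - V⁻)/√2 + O(√ε) = i λ₀^m 𝔯₀ + O(√ε)`, and `𝔯₀` is a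
unit vector.
-/

open Complex
open scoped Real

theorem norm_pow_sub_pow_le_of_norm_le_one {R : Type*} [NormedRing R] [NormOneClass R]
    {a b : R} (ha : ‖a‖ ≤ 1) (hb : ‖b‖ ≤ 1) (k : ℕ) :
    ‖a ^ k - b ^ k‖ ≤ k * ‖a - b‖ := by
  induction k with
  | zero => simp
  | succ k ih =>
    have hbk : ‖b ^ k‖ ≤ 1 := (norm_pow_le b k).trans (pow_le_one₀ (norm_nonneg b) hb)
    calc ‖a ^ (k + 1) - b ^ (k + 1)‖ = ‖a * (a ^ k - b ^ k) + (a - b) * b ^ k‖ := by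
          rw [pow_succ', pow_succ']; congr 1; noncomm_ring
      _ ≤ ‖a‖ * ‖a ^ k - b ^ k‖ + ‖a - b‖ * ‖b ^ k‖ :=
          (norm_add_le _ _).trans (add_le_add (norm_mul_le _ _) (norm_mul_le _ _))
      _ ≤ 1 * (k * ‖a - b‖) + ‖a - b‖ * 1 := by gcongr
      _ = (k + 1 : ℕ) * ‖a - b‖ := by push_cast; ring

theorem norm_exp_I_mul_ofReal_sub_exp_le (x y : ℝ) :
    ‖exp (I * x) - exp (I * y)‖ ≤ |x - y| := by
  have h : exp (I * x) - exp (I * y) = exp (I * y) * (exp (I * (x - y : ℝ)) - 1) := by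
    rw [mul_sub, ← exp_add]; push_cast; ring_nf
  rw [h, norm_mul, norm_exp_I_mul_ofReal, one_mul]
  exact Real.norm_exp_I_mul_ofReal_sub_one_le

theorem norm_pow_sub_mul_exp_le {l₀ z : ℂ} (hl₀ : ‖l₀‖ = 1) (hz : ‖z‖ = 1) (θ φ : ℝ) (N : ℕ) :
    ‖z ^ N - l₀ ^ N * exp (I * φ)‖ ≤ N * ‖z - l₀ * exp (I * θ)‖ + |N * θ - φ| := by
  have hw : ‖l₀ * exp (I * θ)‖ = 1 := by rw [norm_mul, hl₀, norm_exp_I_mul_ofReal, one_mul]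
  have hwN : (l₀ * exp (I * θ)) ^ N = l₀ ^ N * exp (I * (N * θ : ℝ)) := by
    rw [mul_pow, ← exp_nat_mul]; push_cast; ring_nf
  calc ‖z ^ N - l₀ ^ N * exp (I * φ)‖
      ≤ ‖z ^ N - (l₀ * exp (I * θ)) ^ N‖ + ‖(l₀ * exp (I * θ)) ^ N - l₀ ^ N * exp (I * φ)‖ :=
        norm_sub_le_norm_sub_add_norm_sub _ _ _
    _ ≤ N * ‖z - l₀ * exp (I * θ)‖ + |N * θ - φ| := by
        gcongr
        · exact norm_pow_sub_pow_le_of_norm_le_one hz.le hw.le N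
        · rw [hwN, ← mul_sub, norm_mul, norm_pow, hl₀, one_pow, one_mul]
          exact norm_exp_I_mul_ofReal_sub_exp_le _ _

theorem norm_pow_sub_mul_I_le {l₀ z : ℂ} (hl₀ : ‖l₀‖ = 1) (hz : ‖z‖ = 1) (θ : ℝ) (N : ℕ) :
    ‖z ^ N - l₀ ^ N * I‖ ≤ N * ‖z - l₀ * exp (I * θ)‖ + |N * θ - π / 2| := by
  have h := norm_pow_sub_mul_exp_le hl₀ hz θ (π / 2) N
  rwa [show I * ((π / 2 : ℝ) : ℂ) = π / 2 * I by push_cast; ring, exp_pi_div_two_mul_I] at h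

theorem norm_pow_add_mul_I_le {l₀ z : ℂ} (hl₀ : ‖l₀‖ = 1) (hz : ‖z‖ = 1) (θ : ℝ) (N : ℕ) :
    ‖z ^ N + l₀ ^ N * I‖ ≤ N * ‖z - l₀ * exp (-(I * θ))‖ + |N * θ - π / 2| := by
  have h := norm_pow_sub_mul_exp_le hl₀ hz (-θ) (-(π / 2)) N
  rwa [show I * ((-(π / 2) : ℝ) : ℂ) = -π / 2 * I by push_cast; ring, exp_neg_pi_div_two_mul_I,
    mul_neg, sub_neg_eq_add, ofReal_neg, mul_neg,
    show (N : ℝ) * -θ - -(π / 2) = -(N * θ - π / 2) by ring, abs_neg] at h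

theorem Nat.floor_div_mul_mem_Ioc {x t : ℝ} (hx : 0 ≤ x) (ht : 0 < t) :
    ⌊x / t⌋₊ * t ∈ Set.Ioc (x - t) x := by
  constructor
  · have := Nat.lt_floor_add_one (x / t)
    rw [div_lt_iff₀ ht] at this
    linarith
  · exact (le_div_iff₀ ht).mp (Nat.floor_le (div_nonneg hx ht.le))

section InnerProductSpace

variable {𝕜 E : Type*} [RCLike 𝕜] [NormedAddCommGroup E] [InnerProductSpace 𝕜 E]

theorem one_sub_norm_sub_smul_le_norm_inner {r y : E} {μ : 𝕜} (hr : ‖r‖ = 1) (hμ : ‖μ‖ = 1) :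
    1 - ‖y - μ • r‖ ≤ ‖(inner 𝕜 r y : 𝕜)‖ := by
  have h : (inner 𝕜 r y : 𝕜) - inner 𝕜 r (y - μ • r) = μ := by
    rw [inner_sub_right, inner_smul_right, inner_self_eq_norm_sq_to_K, hr]; simp
  have hle : ‖(inner 𝕜 r (y - μ • r) : 𝕜)‖ ≤ ‖y - μ • r‖ := by
    simpa [hr] using norm_inner_le_norm (𝕜 := 𝕜) r (y - μ • r)
  linarith [hμ ▸ h ▸ norm_sub_le (inner 𝕜 r y : 𝕜) (inner 𝕜 r (y - μ • r))]

theorem ContinuousLinearMap.pow_apply_of_apply_eq_smul {R M : Type*} [CommSemiring R]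
    [TopologicalSpace M] [AddCommMonoid M] [Module R M] {f : M →L[R] M} {v : M} {z : R}
    (h : f v = z • v) (k : ℕ) : (f ^ k) v = z ^ k • v := by
  induction k with
  | zero => simp
  | succ k ih => rw [pow_succ, mul_apply_eq_comp, h, map_smul, ih, smul_smul, pow_succ']

theorem norm_apply_smul_add_sub_smul_smul_sub_le {S : E →L[𝕜] E} (hS : ∀ x, ‖S x‖ ≤ ‖x‖)
    {v w v₀ w₀ : E} {a b μ κ : 𝕜} (hv : S v = a • v) (hw : S w = b • w)
    (hv_norm : ‖v‖ ≤ 1) (hw_norm : ‖w‖ ≤ 1) (hμ : ‖μ‖ ≤ 1) (hκ : ‖κ‖ ≤ 1) :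
    ‖S (κ • (v₀ + w₀)) - μ • κ • (v₀ - w₀)‖ ≤
      ‖a - μ‖ + ‖b + μ‖ + 2 * (‖v - v₀‖ + ‖w - w₀‖) := by
  rw [map_smul, smul_comm, ← smul_sub, norm_smul]
  refine mul_le_of_le_one_left (norm_nonneg _) hκ |>.trans ?_
  have h : S (v₀ + w₀) - μ • (v₀ - w₀) = S ((v₀ - v) + (w₀ - w)) + (a - μ) • v
      + (b + μ) • w + μ • ((v - v₀) - (w - w₀)) := by
    simp only [map_add, map_sub, hv, hw]; module
  have hSd : ‖S ((v₀ - v) + (w₀ - w))‖ ≤ ‖v - v₀‖ + ‖w - w₀‖ := by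
    rw [norm_sub_rev v, norm_sub_rev w]; exact (hS _).trans (norm_add_le _ _)
  have hμd : ‖μ • ((v - v₀) - (w - w₀))‖ ≤ ‖v - v₀‖ + ‖w - w₀‖ := by
    rw [norm_smul]; exact mul_le_of_le_one_left (norm_nonneg _) hμ |>.trans (norm_sub_le _ _)
  have hav : ‖(a - μ) • v‖ ≤ ‖a - μ‖ := by
    rw [norm_smul]; exact mul_le_of_le_one_right (norm_nonneg _) hv_norm
  have hbw : ‖(b + μ) • w‖ ≤ ‖b + μ‖ := by
    rw [norm_smul]; exact mul_le_of_le_one_right (norm_nonneg _) hw_norm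
  rw [h]
  refine norm_add₄_le.trans ?_
  linarith

theorem norm_eq_one_of_mem_unitary_of_apply_eq_smul [CompleteSpace E] {T : E →L[𝕜] E}
    (hT : T ∈ unitary (E →L[𝕜] E)) {v : E} {z : 𝕜} (hv : ‖v‖ = 1) (h : T v = z • v) :
    ‖z‖ = 1 := by
  simpa [h, norm_smul, hv] using T.norm_map_of_mem_unitary hT v

end InnerProductSpace

theorem norm_inv_sqrt_two_le_one : ‖((Real.sqrt 2 : ℂ))⁻¹‖ ≤ 1 := by
  rw [norm_inv, Complex.norm_real, Real.norm_of_nonneg (Real.sqrt_nonneg 2)]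
  exact inv_le_one_of_one_le₀ (Real.one_le_sqrt.2 one_le_two)

theorem norm_inv_sqrt_two_smul_sub_eq_one {E : Type*} [NormedAddCommGroup E]
    [InnerProductSpace ℂ E] {u v : E} (hu : ‖u‖ = 1) (hv : ‖v‖ = 1) (huv : inner ℂ u v = 0) :
    ‖((Real.sqrt 2 : ℂ))⁻¹ • (u - v)‖ = 1 := by
  have h : ‖u - v‖ = Real.sqrt 2 := by
    rw [← Real.sqrt_sq (norm_nonneg _), norm_sub_sq (𝕜 := ℂ), hu, hv, huv]; norm_num
  rw [norm_smul, norm_inv, Complex.norm_real, Real.norm_of_nonneg (Real.sqrt_nonneg 2), h,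
    inv_mul_cancel₀ (by positivity)]

theorem stmt0_general (n : ℕ) (c K : ℝ) (hc : 0 < c) (hK : 0 < K)
    (ε₁ : ℝ)
    (l₀ : ℂ) (hl₀ : ‖l₀‖ = 1)
    (U : ℝ → Matrix (Fin n) (Fin n) ℂ)
    (Vp Vm : ℝ → EuclideanSpace ℂ (Fin n))
    (lp lm : ℝ → ℂ)
    (hU : ∀ ε ∈ Set.Ioo (0 : ℝ) ε₁, U ε ∈ Matrix.unitaryGroup (Fin n) ℂ)
    (hVpnorm : ∀ ε ∈ Set.Ioo (0 : ℝ) ε₁, ‖Vp ε‖ = 1)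
    (hVmnorm : ∀ ε ∈ Set.Ioo (0 : ℝ) ε₁, ‖Vm ε‖ = 1)
    (heigp : ∀ ε ∈ Set.Ioo (0 : ℝ) ε₁,
      Matrix.toEuclideanLin (U ε) (Vp ε) = lp ε • Vp ε)
    (heigm : ∀ ε ∈ Set.Ioo (0 : ℝ) ε₁,
      Matrix.toEuclideanLin (U ε) (Vm ε) = lm ε • Vm ε)
    (hlp : ∀ ε ∈ Set.Ioo (0 : ℝ) ε₁,
      ‖lp ε - l₀ * Complex.exp (Complex.I * (c * Real.sqrt ε))‖ ≤ K * ε)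
    (hlm : ∀ ε ∈ Set.Ioo (0 : ℝ) ε₁,
      ‖lm ε - l₀ * Complex.exp (-(Complex.I * (c * Real.sqrt ε)))‖ ≤ K * ε)
    (V₀p V₀m : EuclideanSpace ℂ (Fin n))
    (hV₀pnorm : ‖V₀p‖ = 1) (hV₀mnorm : ‖V₀m‖ = 1)
    (hV₀orth : (inner ℂ V₀p V₀m : ℂ) = 0)
    (hVp : ∀ ε ∈ Set.Ioo (0 : ℝ) ε₁, ‖Vp ε - V₀p‖ ≤ K * Real.sqrt ε)
    (hVm : ∀ ε ∈ Set.Ioo (0 : ℝ) ε₁, ‖Vm ε - V₀m‖ ≤ K * Real.sqrt ε)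
    (ℓ₀ 𝔯₀ : EuclideanSpace ℂ (Fin n))
    (hℓ₀ : ℓ₀ = ((Real.sqrt 2 : ℂ))⁻¹ • (V₀p + V₀m))
    (h𝔯₀ : 𝔯₀ = ((Real.sqrt 2 : ℂ))⁻¹ • (V₀p - V₀m))
    (m : ℝ → ℕ)
    (hm : ∀ ε ∈ Set.Ioo (0 : ℝ) ε₁, m ε = ⌊Real.pi / (2 * c * Real.sqrt ε)⌋₊) :
    ∃ K' > (0 : ℝ), ∀ ε ∈ Set.Ioo (0 : ℝ) ε₁,
      1 - K' * Real.sqrt ε ≤ ‖(inner ℂ 𝔯₀ (Matrix.toEuclideanLin (U ε ^ m ε) ℓ₀) : ℂ)‖ := by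
  refine ⟨π * K / c + 2 * c + 4 * K, by positivity, fun ε hε => ?_⟩
  have hs : 0 < √ε := Real.sqrt_pos.2 hε.1
  have hεs : ε = √ε ^ 2 := (Real.sq_sqrt hε.1.le).symm
  have hN := hm ε hε
  set s := √ε
  set N := m ε
  set T := Matrix.toEuclideanCLM (n := Fin n) (𝕜 := ℂ) (U ε)
  obtain ⟨hN_lo, hN_hi⟩ : N * (c * s) ∈ Set.Ioc (π / 2 - c * s) (π / 2) := by
    rw [hN, show π / (2 * c * s) = π / 2 / (c * s) by ring]
    exact Nat.floor_div_mul_mem_Ioc (by positivity) (by positivity)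
  have hθ : |N * (c * s) - π / 2| ≤ c * s := abs_sub_le_iff.2 ⟨by linarith, by linarith⟩
  have hNKε : N * (K * ε) ≤ π / 2 * (K * s / c) := by
    calc (N : ℝ) * (K * ε) = N * (c * s) * (K * s / c) := by rw [hεs]; field_simp
      _ ≤ π / 2 * (K * s / c) := by gcongr
  have hT : T ∈ unitary _ := Unitary.map_mem _ (hU ε hε)
  have hplus : ‖lp ε ^ N - l₀ ^ N * I‖ ≤ N * (K * ε) + c * s :=
    (norm_pow_sub_mul_I_le hl₀ (norm_eq_one_of_mem_unitary_of_apply_eq_smul hT (hVpnorm ε hε)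
      (heigp ε hε)) (c * s) N).trans (by gcongr; simpa using hlp ε hε)
  have hminus : ‖lm ε ^ N + l₀ ^ N * I‖ ≤ N * (K * ε) + c * s :=
    (norm_pow_add_mul_I_le hl₀ (norm_eq_one_of_mem_unitary_of_apply_eq_smul hT (hVmnorm ε hε)
      (heigm ε hε)) (c * s) N).trans (by gcongr; simpa using hlm ε hε)
  have hμ : ‖l₀ ^ N * I‖ = 1 := by rw [norm_mul, norm_pow, hl₀, one_pow, norm_I, one_mul]
  have hvec := norm_apply_smul_add_sub_smul_smul_sub_le (S := T ^ N)
    (fun x => (T ^ N).norm_map_of_mem_unitary (pow_mem hT N) x |>.le)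
    (T.pow_apply_of_apply_eq_smul (heigp ε hε) N) (T.pow_apply_of_apply_eq_smul (heigm ε hε) N)
    (hVpnorm ε hε).le (hVmnorm ε hε).le (v₀ := V₀p) (w₀ := V₀m) hμ.le norm_inv_sqrt_two_le_one
  rw [← hℓ₀, ← h𝔯₀, ← map_pow] at hvec
  refine le_trans ?_ (one_sub_norm_sub_smul_le_norm_inner
    (h𝔯₀ ▸ norm_inv_sqrt_two_smul_sub_eq_one hV₀pnorm hV₀mnorm hV₀orth) hμ)
  rw [← Matrix.coe_toEuclideanCLM_eq_toEuclideanLin, ContinuousLinearMap.coe_coe,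
    sub_le_sub_iff_left]
  calc _ ≤ 2 * (π / 2 * (K * s / c) + c * s) + 2 * (K * s + K * s) := by
        linarith [hVp ε hε, hVm ε hε]
    _ = (π * K / c + 2 * c + 4 * K) * s := by field_simp; ring

/-- Theorem 4.13: iterating the time step operator `m(ε) = ⌊π/(2c√ε)⌋` times exchanges the
Left and Right active eigenvectors `ℓ₀ = (V₀⁺+V₀⁻)/√2` and `𝔯₀ = (V₀⁺−V₀⁻)/√2` almost
completely: `|⟨𝔯₀, U(ε)^{m(ε)} ℓ₀⟩| ≥ 1 − K′√ε`. -/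
theorem stmt0 (n : ℕ) (c K : ℝ) (hc : 0 < c) (hK : 0 < K)
    (ε₁ : ℝ) (hε₁ : ε₁ ∈ Set.Ioo (0 : ℝ) 1)
    (l₀ : ℂ) (hl₀ : ‖l₀‖ = 1)
    (U : ℝ → Matrix (Fin n) (Fin n) ℂ)
    (Vp Vm : ℝ → EuclideanSpace ℂ (Fin n))
    (lp lm : ℝ → ℂ)
    (hU : ∀ ε ∈ Set.Ioo (0 : ℝ) ε₁, U ε ∈ Matrix.unitaryGroup (Fin n) ℂ)
    (hVpnorm : ∀ ε ∈ Set.Ioo (0 : ℝ) ε₁, ‖Vp ε‖ = 1)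
    (hVmnorm : ∀ ε ∈ Set.Ioo (0 : ℝ) ε₁, ‖Vm ε‖ = 1)
    (heigp : ∀ ε ∈ Set.Ioo (0 : ℝ) ε₁,
      Matrix.toEuclideanLin (U ε) (Vp ε) = lp ε • Vp ε)
    (heigm : ∀ ε ∈ Set.Ioo (0 : ℝ) ε₁,
      Matrix.toEuclideanLin (U ε) (Vm ε) = lm ε • Vm ε)
    (hlp : ∀ ε ∈ Set.Ioo (0 : ℝ) ε₁,
      ‖lp ε - l₀ * Complex.exp (Complex.I * (c * Real.sqrt ε))‖ ≤ K * ε)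
    (hlm : ∀ ε ∈ Set.Ioo (0 : ℝ) ε₁,
      ‖lm ε - l₀ * Complex.exp (-(Complex.I * (c * Real.sqrt ε)))‖ ≤ K * ε)
    (V₀p V₀m : EuclideanSpace ℂ (Fin n))
    (hV₀pnorm : ‖V₀p‖ = 1) (hV₀mnorm : ‖V₀m‖ = 1)
    (hV₀orth : (inner ℂ V₀p V₀m : ℂ) = 0)
    (hVp : ∀ ε ∈ Set.Ioo (0 : ℝ) ε₁, ‖Vp ε - V₀p‖ ≤ K * Real.sqrt ε)
    (hVm : ∀ ε ∈ Set.Ioo (0 : ℝ) ε₁, ‖Vm ε - V₀m‖ ≤ K * Real.sqrt ε)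
    (ℓ₀ 𝔯₀ : EuclideanSpace ℂ (Fin n))
    (hℓ₀ : ℓ₀ = ((Real.sqrt 2 : ℂ))⁻¹ • (V₀p + V₀m))
    (h𝔯₀ : 𝔯₀ = ((Real.sqrt 2 : ℂ))⁻¹ • (V₀p - V₀m))
    (m : ℝ → ℕ)
    (hm : ∀ ε ∈ Set.Ioo (0 : ℝ) ε₁, m ε = ⌊Real.pi / (2 * c * Real.sqrt ε)⌋₊) :
    ∃ K' > (0 : ℝ), ∀ ε ∈ Set.Ioo (0 : ℝ) ε₁,
      1 - K' * Real.sqrt ε ≤ ‖(inner ℂ 𝔯₀ (Matrix.toEuclideanLin (U ε ^ m ε) ℓ₀) : ℂ)‖ :=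
  stmt0_general n c K hc hK ε₁ l₀ hl₀ U Vp Vm lp lm hU hVpnorm hVmnorm heigp heigm hlp hlm V₀p V₀m
    hV₀pnorm hV₀mnorm hV₀orth hVp hVm ℓ₀ 𝔯₀ hℓ₀ h𝔯₀ m hm
end

section
/- Let C₀, f ∈ ℂ[z] be nonzero polynomials and set C(z,ε) = C₀(z) + ε·f(z) for ε ∈ ℂ. Let λ₀ ∈ ℂ be a root of C₀ of multiplicity s ≥ 1 and let t be the multiplicity of λ₀ as a root of f. Assume t ≥ s − 2. Then exactly one of the following holds: (i) if t ≥ s, then (z − λ₀)^s divides C(·,ε) for every ε ∈ ℂ (all s roots in the λ₀ family are constant); (ii) if t = s − 1, then for every ε ≠ 0 the root λ₀ of C(·,ε) has multiplicity exactly s − 1, and there exist δ, σ, M > 0 such that for all ε with 0 < |ε| < σ the polynomial C(·,ε) has exactly one root z (counted with multiplicity) satisfying 0 < |z − λ₀| < δ, and that root satisfies |z − λ₀| ≤ M·|ε|; (iii) if t = s − 2, then for every ε ≠ 0 the root λ₀ of C(·,ε) has multiplicity exactly s − 2, and there exist δ, σ, M > 0 such that for all ε with 0 < |ε| < σ the polynomial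 C(·,ε) has exactly two roots z (counted with multiplicity) satisfying 0 < |z − λ₀| < δ, each of which satisfies |z − λ₀| ≤ M·|ε|^{1/2}. (The three-case theorem, Theorem 4.5.) -/
/-!
Write `C₀ = (z - λ₀)^s g` and `f = (z - λ₀)^t h` with `g(λ₀) ≠ 0 ≠ h(λ₀)`. If `s = t + j` then
`C₀ + ε f = (z - λ₀)^t Q_ε` with `Q_ε = (z - λ₀)^j g + ε h`, and `Q_ε(λ₀) = ε h(λ₀) ≠ 0` for
`ε ≠ 0`.
A root `z` of `Q_ε` near `λ₀` satisfies `|z - λ₀|^j |g(z)| = |ε| |h(z)|`, so `|z - λ₀|^j ≍ |ε|`.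

To count these `k` roots, compare `|Q_ε|` at `λ₀` and at a point `w` with `|w - λ₀| = δ/2`.
Writing `Q_ε` as its leading coefficient times `∏ (z - r)`, the far roots `r` contribute factors
`|λ₀ - r|` and `|w - r|` within a factor `2` of each other, the near ones contribute
`|w - r| ≍ δ`, and `|Q_ε(w)| ≍ |Q_0(w)| ≠ 0` while `|Q_ε(λ₀)| = |ε| |h(λ₀)|`. Hence the product of
the `k` distances `|λ₀ - r|` is `≍ |ε|`, while its `j`-th power is `≍ |ε|^k`. So `|ε|^j ≍ |ε|^k`,
which is impossible for small `ε` unless `k = j`.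
-/

open Filter Topology Multiset Polynomial

theorem eventually_mul_pow_lt_mul_pow {m n : ℕ} (hmn : m < n) {A : ℝ} (hA : 0 < A) (B : ℝ) :
    ∀ᶠ x in 𝓝[>] (0 : ℝ), B * x ^ n < A * x ^ m := by
  have hlim : Tendsto (fun x : ℝ => B * x ^ (n - m)) (𝓝 0) (𝓝 0) := by
    simpa [zero_pow (Nat.sub_ne_zero_of_lt hmn)] using
      ((continuous_pow (n - m)).tendsto 0).const_mul B
  filter_upwards [nhdsWithin_le_nhds (hlim.eventually_lt_const hA), self_mem_nhdsWithin]
    with x hx (hx0 : 0 < x)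
  calc B * x ^ n = B * x ^ (n - m) * x ^ m := by rw [mul_assoc, pow_sub_mul_pow x hmn.le]
    _ < A * x ^ m := mul_lt_mul_of_pos_right hx (pow_pos hx0 m)

theorem eventually_not_pow_le_and_pow_le {j k : ℕ} (hkj : k ≠ j) {A B A' B' : ℝ} (hA : 0 < A)
    (hA' : 0 < A') : ∀ᶠ x in 𝓝[>] (0 : ℝ), ¬ (A * x ^ j ≤ B * x ^ k ∧ A' * x ^ k ≤ B' * x ^ j) := by
  rcases hkj.lt_or_gt with hlt | hlt
  · filter_upwards [eventually_mul_pow_lt_mul_pow hlt hA' B'] with x hx h using hx.not_ge h.2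
  · filter_upwards [eventually_mul_pow_lt_mul_pow hlt hA B] with x hx h using hx.not_ge h.1

theorem ContinuousAt.eventually_norm_comparable {α E : Type*} [TopologicalSpace α]
    [NormedAddCommGroup E] {f : α → E} {c : α} (hf : ContinuousAt f c) (hc : f c ≠ 0) :
    ∀ᶠ z in 𝓝 c, ‖f c‖ / 2 ≤ ‖f z‖ ∧ ‖f z‖ ≤ 2 * ‖f c‖ := by
  have hpos : 0 < ‖f c‖ := norm_pos_iff.2 hc
  exact (hf.norm.eventually_const_le (half_lt_self hpos)).and
    (hf.norm.eventually_le_const (by linarith))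

namespace Polynomial

section NormedField

variable {𝕜 : Type*} [NormedField 𝕜]

noncomputable def rootsInBall (p : 𝕜[X]) (c : 𝕜) (δ : ℝ) : Multiset 𝕜 :=
  p.roots.filter fun r => ‖r - c‖ < δ

theorem norm_sub_pow_bounds_of_isRoot {g h : 𝕜[X]} {c z ε : 𝕜}
    {j : ℕ} (hg : g.eval c ≠ 0) (hz : ((X - C c) ^ j * g + C ε * h).IsRoot z)
    (hgz : ‖g.eval c‖ / 2 ≤ ‖g.eval z‖ ∧ ‖g.eval z‖ ≤ 2 * ‖g.eval c‖)
    (hhz : ‖h.eval c‖ / 2 ≤ ‖h.eval z‖ ∧ ‖h.eval z‖ ≤ 2 * ‖h.eval c‖) :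
    ‖h.eval c‖ / (4 * ‖g.eval c‖) * ‖ε‖ ≤ ‖z - c‖ ^ j ∧
      ‖z - c‖ ^ j ≤ 4 * ‖h.eval c‖ / ‖g.eval c‖ * ‖ε‖ := by
  have hG : 0 < ‖g.eval c‖ := norm_pos_iff.2 hg
  have hroot : ‖z - c‖ ^ j * ‖g.eval z‖ = ‖ε‖ * ‖h.eval z‖ := by
    rw [← norm_pow, ← norm_mul, ← norm_mul, ← norm_neg (ε * _)]
    congr 1
    simpa [eq_neg_iff_add_eq_zero] using hz
  have hA := pow_nonneg (norm_nonneg (z - c)) j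
  have hε := norm_nonneg ε
  constructor
  · rw [div_mul_eq_mul_div, div_le_iff₀ (by positivity)]
    nlinarith [mul_le_mul_of_nonneg_left hhz.1 hε, mul_le_mul_of_nonneg_left hgz.2 hA]
  · rw [div_mul_eq_mul_div, le_div_iff₀ hG]
    nlinarith [mul_le_mul_of_nonneg_left hhz.2 hε, mul_le_mul_of_nonneg_left hgz.1 hA]

end NormedField

section AlgClosed

variable {𝕜 : Type*} [NormedField 𝕜] [IsAlgClosed 𝕜]

theorem norm_eval_eq_norm_leadingCoeff_mul_prod_roots (p : 𝕜[X]) (z : 𝕜) :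
    ‖p.eval z‖ = ‖p.leadingCoeff‖ * (p.roots.map fun r => ‖z - r‖).prod := by
  conv_lhs => rw [← C_leadingCoeff_mul_prod_multiset_X_sub_C (p := p)
    IsAlgClosed.card_roots_eq_natDegree]
  simp only [eval_mul, eval_C, eval_multiset_prod, Multiset.map_map, Function.comp_def, eval_sub,
    eval_X, norm_mul]
  congr 1
  simpa [Multiset.map_map, Function.comp_def] using map_multiset_prod (normHom (α := 𝕜))
    (p.roots.map fun r => z - r)

theorem norm_eval_mul_prod_rootsInBall_le (p : 𝕜[X]) {c x y : 𝕜} {δ C : ℝ} (hC : 1 ≤ C)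
    (hfar : ∀ r ∈ p.roots, δ ≤ ‖r - c‖ → ‖x - r‖ ≤ C * ‖y - r‖) :
    ‖p.eval x‖ * ((p.rootsInBall c δ).map fun r => ‖y - r‖).prod ≤
      C ^ p.natDegree * (‖p.eval y‖ * ((p.rootsInBall c δ).map fun r => ‖x - r‖).prod) := by
  set F := p.roots.filter fun r => ¬ ‖r - c‖ < δ
  have hsplit : ∀ z, ‖p.eval z‖ = ‖p.leadingCoeff‖ *
      (((p.rootsInBall c δ).map fun r => ‖z - r‖).prod * (F.map fun r => ‖z - r‖).prod) := by
    intro z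
    rw [norm_eval_eq_norm_leadingCoeff_mul_prod_roots, ← prod_add, ← map_add, rootsInBall,
      filter_add_not]
  have hF : (F.map fun r => ‖x - r‖).prod ≤ C ^ p.natDegree * (F.map fun r => ‖y - r‖).prod := by
    calc (F.map fun r => ‖x - r‖).prod ≤ (F.map fun r => C * ‖y - r‖).prod :=
          prod_map_le_prod_map₀ _ _ (fun _ _ => norm_nonneg _) fun r hr =>
            hfar r (mem_filter.1 hr).1 (not_lt.1 (mem_filter.1 hr).2)
      _ = C ^ card F * (F.map fun r => ‖y - r‖).prod := by
          rw [prod_map_mul, map_const', prod_replicate]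
      _ ≤ C ^ p.natDegree * (F.map fun r => ‖y - r‖).prod := by
          gcongr
          · exact prod_map_nonneg fun _ _ => norm_nonneg _
          · exact (card_le_card (filter_le _ _)).trans (card_roots' p)
  rw [hsplit x, hsplit y]
  set πx := ((p.rootsInBall c δ).map fun r => ‖x - r‖).prod
  set πy := ((p.rootsInBall c δ).map fun r => ‖y - r‖).prod
  have hπ : 0 ≤ ‖p.leadingCoeff‖ * πx * πy := mul_nonneg (mul_nonneg (norm_nonneg _)
    (prod_map_nonneg fun _ _ => norm_nonneg _)) (prod_map_nonneg fun _ _ => norm_nonneg _)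
  calc _ = ‖p.leadingCoeff‖ * πx * πy * (F.map fun r => ‖x - r‖).prod := by ring
    _ ≤ ‖p.leadingCoeff‖ * πx * πy * (C ^ p.natDegree * (F.map fun r => ‖y - r‖).prod) :=
        mul_le_mul_of_nonneg_left hF hπ
    _ = _ := by ring

theorem norm_eval_rootsInBall_bounds (p : 𝕜[X]) {c w : 𝕜} {δ : ℝ} (hw : ‖w - c‖ = δ / 2)
    (hnear : ∀ r ∈ p.rootsInBall c δ, ‖r - c‖ ≤ δ / 4) :
    ‖p.eval c‖ * (δ / 4) ^ card (p.rootsInBall c δ) ≤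
        2 ^ p.natDegree * (‖p.eval w‖ * ((p.rootsInBall c δ).map fun r => ‖c - r‖).prod) ∧
      ‖p.eval w‖ * ((p.rootsInBall c δ).map fun r => ‖c - r‖).prod ≤
        2 ^ p.natDegree * (‖p.eval c‖ * δ ^ card (p.rootsInBall c δ)) := by
  have hδ : 0 ≤ δ := by linarith [norm_nonneg (w - c)]
  have tri := norm_sub_le_norm_sub_add_norm_sub (E := 𝕜)
  have hcw : ‖c - w‖ = δ / 2 := by rw [norm_sub_rev, hw]
  have hN : ∀ r ∈ p.rootsInBall c δ, δ / 4 ≤ ‖w - r‖ ∧ ‖w - r‖ ≤ δ := fun r hr => by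
    have := hnear r hr
    constructor <;> linarith [tri w r c, tri w c r, norm_sub_rev c r]
  refine ⟨?_, ?_⟩
  · calc ‖p.eval c‖ * (δ / 4) ^ card (p.rootsInBall c δ)
        ≤ ‖p.eval c‖ * ((p.rootsInBall c δ).map fun r => ‖w - r‖).prod := by
          gcongr
          simpa using prod_map_le_prod_map₀ (fun _ => δ / 4) _ (fun _ _ => by positivity)
            fun r hr => (hN r hr).1
      _ ≤ _ := norm_eval_mul_prod_rootsInBall_le p one_le_two fun r _ hr => by
          linarith [tri c w r, norm_sub_rev c r]
  · calc _ ≤ 2 ^ p.natDegree * (‖p.eval c‖ * ((p.rootsInBall c δ).map fun r => ‖w - r‖).prod) :=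
          norm_eval_mul_prod_rootsInBall_le p one_le_two fun r _ hr => by
            linarith [tri w c r, norm_sub_rev c r]
      _ ≤ _ := by
          gcongr
          simpa using prod_map_le_prod_map₀ _ (fun _ => δ) (fun _ _ => norm_nonneg _)
            fun r hr => (hN r hr).2

theorem pow_norm_eval_rootsInBall_bounds (p : 𝕜[X]) {c w : 𝕜} {δ lo hi : ℝ} {j : ℕ}
    (hw : ‖w - c‖ = δ / 2) (hlo : 0 ≤ lo)
    (hroots : ∀ r ∈ p.rootsInBall c δ, ‖r - c‖ ≤ δ / 4 ∧ lo ≤ ‖r - c‖ ^ j ∧ ‖r - c‖ ^ j ≤ hi) :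
    (‖p.eval c‖ * (δ / 4) ^ card (p.rootsInBall c δ)) ^ j ≤
        (2 ^ p.natDegree * ‖p.eval w‖) ^ j * hi ^ card (p.rootsInBall c δ) ∧
      ‖p.eval w‖ ^ j * lo ^ card (p.rootsInBall c δ) ≤
        (2 ^ p.natDegree * ‖p.eval c‖ * δ ^ card (p.rootsInBall c δ)) ^ j := by
  have hδ : 0 ≤ δ := by linarith [norm_nonneg (w - c)]
  obtain ⟨h₁, h₂⟩ := norm_eval_rootsInBall_bounds p hw fun r hr => (hroots r hr).1
  set π := ((p.rootsInBall c δ).map fun r => ‖c - r‖).prod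
  have hπ : lo ^ card (p.rootsInBall c δ) ≤ π ^ j ∧ π ^ j ≤ hi ^ card (p.rootsInBall c δ) := by
    rw [← prod_map_pow]
    constructor
    · simpa using prod_map_le_prod_map₀ (fun _ => lo) _ (fun _ _ => hlo) fun r hr => by
        simpa [norm_sub_rev] using (hroots r hr).2.1
    · simpa using prod_map_le_prod_map₀ (fun r => ‖c - r‖ ^ j) (fun _ => hi)
        (fun _ _ => by positivity) fun r hr => by
        simpa [norm_sub_rev] using (hroots r hr).2.2
  constructor
  · calc _ ≤ (2 ^ p.natDegree * ‖p.eval w‖ * π) ^ j :=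
          pow_le_pow_left₀ (by positivity) (h₁.trans_eq (by ring)) j
      _ = (2 ^ p.natDegree * ‖p.eval w‖) ^ j * π ^ j := by ring
      _ ≤ _ := by gcongr; exact hπ.2
  · calc _ ≤ ‖p.eval w‖ ^ j * π ^ j := by gcongr; exact hπ.1
      _ = (‖p.eval w‖ * π) ^ j := by ring
      _ ≤ _ := pow_le_pow_left₀ (mul_nonneg (norm_nonneg _) (prod_map_nonneg fun _ _ =>
          norm_nonneg _)) (h₂.trans_eq (by ring)) j

end AlgClosed

section Perturbation

variable {R : Type*} [CommRing R] {C₀ f g h : R[X]} {c : R} {j : ℕ}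

theorem natDegree_X_sub_C_pow_mul_add_C_mul_le (ε : R) :
    ((X - C c) ^ j * g + C ε * h).natDegree ≤ j + g.natDegree + h.natDegree := by
  refine (natDegree_add_le _ _).trans (max_le ?_ ((natDegree_C_mul_le _ _).trans (by omega)))
  refine natDegree_mul_le.trans ?_
  have := natDegree_pow_le_of_le j (natDegree_X_sub_C_le c)
  omega

theorem add_C_mul_eq_X_sub_C_pow_mul
    (hsj : C₀.rootMultiplicity c = f.rootMultiplicity c + j) (ε : R) :
    C₀ + C ε * f = (X - C c) ^ f.rootMultiplicity c *
      ((X - C c) ^ j * (C₀ /ₘ (X - C c) ^ C₀.rootMultiplicity c) +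
        C ε * (f /ₘ (X - C c) ^ f.rootMultiplicity c)) := by
  conv_lhs => rw [← pow_mul_divByMonic_rootMultiplicity_eq C₀ c,
    ← pow_mul_divByMonic_rootMultiplicity_eq f c]
  rw [hsj, pow_add]
  ring

theorem not_isRoot_X_sub_C_pow_mul_add_C_mul [IsDomain R] (hj : j ≠ 0) (hh : h.eval c ≠ 0)
    {ε : R} (hε : ε ≠ 0) : ¬ ((X - C c) ^ j * g + C ε * h).IsRoot c := by
  simp [hj, hε, hh]

theorem rootMultiplicity_add_C_mul [IsDomain R] (hf : f ≠ 0) (hj : j ≠ 0)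
    (hsj : C₀.rootMultiplicity c = f.rootMultiplicity c + j) {ε : R} (hε : ε ≠ 0) :
    (C₀ + C ε * f).rootMultiplicity c = f.rootMultiplicity c := by
  have hQ := not_isRoot_X_sub_C_pow_mul_add_C_mul (g := C₀ /ₘ (X - C c) ^ C₀.rootMultiplicity c)
    hj (eval_divByMonic_pow_rootMultiplicity_ne_zero c hf) hε
  rw [add_C_mul_eq_X_sub_C_pow_mul hsj, rootMultiplicity_mul
    (mul_ne_zero (pow_ne_zero _ (X_sub_C_ne_zero c)) fun h0 => hQ (by simp [h0])),
    rootMultiplicity_X_sub_C_pow, rootMultiplicity_eq_zero hQ, add_zero]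

end Perturbation

theorem exists_eventually_norm_eval_comparable {g h : ℂ[X]} {c : ℂ} {j : ℕ} {δ : ℝ} (hδ : 0 < δ)
    (hg : ∀ z, ‖z - c‖ < δ → g.eval z ≠ 0) :
    ∃ w : ℂ, ‖w - c‖ = δ / 2 ∧ ∃ q > 0, ∀ᶠ ε in 𝓝 (0 : ℂ),
      q / 2 ≤ ‖((X - C c) ^ j * g + C ε * h).eval w‖ ∧
        ‖((X - C c) ^ j * g + C ε * h).eval w‖ ≤ 2 * q := by
  set w : ℂ := c + (δ / 2 : ℝ)
  have hw : ‖w - c‖ = δ / 2 := by simp [w, abs_of_pos hδ]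
  have hQ0 : ((X - C c) ^ j * g + C 0 * h).eval w ≠ 0 := by
    simp only [C_0, zero_mul, add_zero, eval_mul, eval_pow, eval_sub, eval_X, eval_C]
    refine mul_ne_zero (pow_ne_zero _ ?_) (hg w (by rw [hw]; linarith))
    simp [w, hδ.ne']
  refine ⟨w, hw, _, norm_pos_iff.2 hQ0, ContinuousAt.eventually_norm_comparable
    (f := fun ε : ℂ => ((X - C c) ^ j * g + C ε * h).eval w) ?_ hQ0⟩
  simp only [eval_add, eval_mul, eval_C]
  fun_prop

theorem eventually_card_rootsInBall_ne {g h : ℂ[X]} {c : ℂ} {j : ℕ} (hj : j ≠ 0) {δ κ K : ℝ}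
    (hδ : 0 < δ) (hκ : 0 < κ) (hK : 0 ≤ K) (hg : ∀ z, ‖z - c‖ < δ → g.eval z ≠ 0)
    (hh : h.eval c ≠ 0) (hroots : ∀ ε : ℂ, ∀ z ∈ ((X - C c) ^ j * g + C ε * h).rootsInBall c δ,
      κ * ‖ε‖ ≤ ‖z - c‖ ^ j ∧ ‖z - c‖ ^ j ≤ K * ‖ε‖) {k : ℕ} (hkj : k ≠ j) :
    ∀ᶠ ε in 𝓝[≠] 0, card (((X - C c) ^ j * g + C ε * h).rootsInBall c δ) ≠ k := by
  set Q : ℂ → ℂ[X] := fun ε => (X - C c) ^ j * g + C ε * h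
  set D := j + g.natDegree + h.natDegree
  obtain ⟨w, hw, q, hq, hQw⟩ := exists_eventually_norm_eval_comparable (h := h) (j := j) hδ hg
  have hsmall : ∀ᶠ ε : ℂ in 𝓝 0, K * ‖ε‖ < (δ / 4) ^ j := by
    have : Tendsto (fun ε : ℂ => K * ‖ε‖) (𝓝 0) (𝓝 0) := by
      simpa using tendsto_norm_zero.const_mul K
    exact this.eventually_lt_const (by positivity)
  set hc := ‖h.eval c‖
  have hc0 : 0 < hc := norm_pos_iff.2 hh
  filter_upwards [nhdsWithin_le_nhds (hQw.and hsmall), tendsto_norm_nhdsNE_zero.eventually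
    (eventually_not_pow_le_and_pow_le hkj (A := (hc * (δ / 4) ^ k) ^ j)
      (B := (2 ^ D * (2 * q)) ^ j * K ^ k) (A' := (q / 2) ^ j * κ ^ k)
      (B' := (2 ^ D * hc * δ ^ k) ^ j) (by positivity) (by positivity))]
    with ε ⟨⟨hQw₁, hQw₂⟩, hε⟩ hcontra hcard
  set x := ‖ε‖
  have hnear : ∀ r ∈ (Q ε).rootsInBall c δ,
      ‖r - c‖ ≤ δ / 4 ∧ κ * x ≤ ‖r - c‖ ^ j ∧ ‖r - c‖ ^ j ≤ K * x := fun r hr =>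
    ⟨le_of_pow_le_pow_left₀ hj (by positivity) ((hroots ε r hr).2.trans hε.le), hroots ε r hr⟩
  obtain ⟨h₁, h₂⟩ := pow_norm_eval_rootsInBall_bounds (Q ε) hw (by positivity) hnear
  have hQc : ‖(Q ε).eval c‖ = hc * x := by simp [Q, hj, mul_comm, hc, x]
  have hD : (2 : ℝ) ^ (Q ε).natDegree ≤ 2 ^ D :=
    pow_le_pow_right₀ one_le_two (natDegree_X_sub_C_pow_mul_add_C_mul_le ε)
  rw [hcard, hQc] at h₁ h₂
  refine absurd ⟨?_, ?_⟩ hcontra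
  · calc (hc * (δ / 4) ^ k) ^ j * x ^ j = (hc * x * (δ / 4) ^ k) ^ j := by ring
      _ ≤ (2 ^ (Q ε).natDegree * ‖(Q ε).eval w‖) ^ j * (K * x) ^ k := h₁
      _ ≤ (2 ^ D * (2 * q)) ^ j * (K * x) ^ k := by gcongr
      _ = (2 ^ D * (2 * q)) ^ j * K ^ k * x ^ k := by ring
  · calc (q / 2) ^ j * κ ^ k * x ^ k = (q / 2) ^ j * (κ * x) ^ k := by ring
      _ ≤ ‖(Q ε).eval w‖ ^ j * (κ * x) ^ k := by gcongr
      _ ≤ (2 ^ (Q ε).natDegree * (hc * x) * δ ^ k) ^ j := h₂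
      _ ≤ (2 ^ D * (hc * x) * δ ^ k) ^ j := by gcongr
      _ = (2 ^ D * hc * δ ^ k) ^ j * x ^ j := by ring

theorem eventually_card_rootsInBall_eq {g h : ℂ[X]} {c : ℂ} {j : ℕ} (hj : j ≠ 0) {δ κ K : ℝ}
    (hδ : 0 < δ) (hκ : 0 < κ) (hK : 0 ≤ K) (hg : ∀ z, ‖z - c‖ < δ → g.eval z ≠ 0)
    (hh : h.eval c ≠ 0) (hroots : ∀ ε : ℂ, ∀ z ∈ ((X - C c) ^ j * g + C ε * h).rootsInBall c δ,
      κ * ‖ε‖ ≤ ‖z - c‖ ^ j ∧ ‖z - c‖ ^ j ≤ K * ‖ε‖) :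
    ∀ᶠ ε in 𝓝[≠] 0, card (((X - C c) ^ j * g + C ε * h).rootsInBall c δ) = j := by
  have hne : ∀ k, ∀ᶠ ε in 𝓝[≠] 0,
      card (((X - C c) ^ j * g + C ε * h).rootsInBall c δ) = k → k = j := fun k => by
    rcases eq_or_ne k j with rfl | hkj
    · exact Eventually.of_forall fun _ _ => rfl
    · exact (eventually_card_rootsInBall_ne hj hδ hκ hK hg hh hroots hkj).mono
        fun _ hε hk => absurd hk hε
  set D := j + g.natDegree + h.natDegree
  have hle : ∀ ε, card (((X - C c) ^ j * g + C ε * h).rootsInBall c δ) ≤ D := fun ε =>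
    (card_le_card (filter_le _ _)).trans ((card_roots' _).trans
      (natDegree_X_sub_C_pow_mul_add_C_mul_le ε))
  filter_upwards [(Finset.range (D + 1)).eventually_all.2 fun k _ => hne k] with ε hε
  exact hε _ (Finset.mem_range.2 (Nat.lt_succ_of_le (hle ε))) rfl

theorem exists_rootsInBall_pow_le_and_card_eq {g h : ℂ[X]} {c : ℂ} {j : ℕ} (hj : j ≠ 0)
    (hg : g.eval c ≠ 0) (hh : h.eval c ≠ 0) :
    ∃ δ > 0, ∃ K > 0,
      (∀ ε : ℂ, ∀ z ∈ ((X - C c) ^ j * g + C ε * h).rootsInBall c δ, ‖z - c‖ ^ j ≤ K * ‖ε‖) ∧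
      ∀ᶠ ε in 𝓝[≠] 0, card (((X - C c) ^ j * g + C ε * h).rootsInBall c δ) = j := by
  obtain ⟨δ, hδ, hloc⟩ := Metric.eventually_nhds_iff.1
    ((g.continuous.continuousAt.eventually_norm_comparable hg).and
      (h.continuous.continuousAt.eventually_norm_comparable hh))
  have hroots : ∀ ε : ℂ, ∀ z ∈ ((X - C c) ^ j * g + C ε * h).rootsInBall c δ,
      ‖h.eval c‖ / (4 * ‖g.eval c‖) * ‖ε‖ ≤ ‖z - c‖ ^ j ∧
        ‖z - c‖ ^ j ≤ 4 * ‖h.eval c‖ / ‖g.eval c‖ * ‖ε‖ := fun ε z hz => by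
    obtain ⟨hz, hzδ⟩ := mem_filter.1 hz
    obtain ⟨hgz, hhz⟩ := hloc (by rwa [dist_eq_norm])
    exact norm_sub_pow_bounds_of_isRoot hg (mem_roots'.1 hz).2 hgz hhz
  have hg0 : 0 < ‖g.eval c‖ := norm_pos_iff.2 hg
  have hh0 : 0 < ‖h.eval c‖ := norm_pos_iff.2 hh
  refine ⟨δ, hδ, _, by positivity, fun ε z hz => (hroots ε z hz).2,
    eventually_card_rootsInBall_eq hj hδ (by positivity) (by positivity) (fun z hz => ?_) hh
      hroots⟩
  have := (hloc (by rwa [dist_eq_norm])).1.1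
  exact norm_pos_iff.1 (by linarith)

theorem filter_roots_add_C_mul {C₀ f : ℂ[X]} {c : ℂ} {j : ℕ} (hf : f ≠ 0) (hj : j ≠ 0)
    (hsj : C₀.rootMultiplicity c = f.rootMultiplicity c + j) {ε : ℂ} (hε : ε ≠ 0) (δ : ℝ) :
    (C₀ + C ε * f).roots.filter (fun z => 0 < ‖z - c‖ ∧ ‖z - c‖ < δ) =
      ((X - C c) ^ j * (C₀ /ₘ (X - C c) ^ C₀.rootMultiplicity c) +
        C ε * (f /ₘ (X - C c) ^ f.rootMultiplicity c)).rootsInBall c δ := by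
  have hQ := not_isRoot_X_sub_C_pow_mul_add_C_mul (g := C₀ /ₘ (X - C c) ^ C₀.rootMultiplicity c)
    hj (eval_divByMonic_pow_rootMultiplicity_ne_zero c hf) hε
  rw [add_C_mul_eq_X_sub_C_pow_mul hsj, roots_mul
    (mul_ne_zero (pow_ne_zero _ (X_sub_C_ne_zero c)) fun h0 => hQ (by simp [h0])),
    roots_pow, roots_X_sub_C, filter_add, rootsInBall]
  rw [filter_eq_nil.2 fun z hz => by simp [mem_singleton.1 (mem_nsmul.1 hz).2], zero_add]
  refine filter_congr fun z hz => and_iff_right (norm_pos_iff.2 (sub_ne_zero.2 ?_))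
  rintro rfl
  exact hQ (isRoot_of_mem_roots hz)

theorem exists_card_roots_near_add_C_mul {C₀ f : ℂ[X]} {c : ℂ} {j : ℕ} (hf : f ≠ 0) (hj : j ≠ 0)
    (hsj : C₀.rootMultiplicity c = f.rootMultiplicity c + j) :
    ∃ δ > (0 : ℝ), ∃ σ > (0 : ℝ), ∃ M > (0 : ℝ), ∀ ε : ℂ, 0 < ‖ε‖ → ‖ε‖ < σ →
      ((C₀ + C ε * f).roots.filter fun z => 0 < ‖z - c‖ ∧ ‖z - c‖ < δ).card = j ∧
        ∀ z ∈ (C₀ + C ε * f).roots, 0 < ‖z - c‖ → ‖z - c‖ < δ → ‖z - c‖ ^ j ≤ M * ‖ε‖ := by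
  have hC₀ : C₀ ≠ 0 := by
    rintro rfl
    simp at hsj
    omega
  obtain ⟨δ, hδ, M, hM, hbound, hcard⟩ := exists_rootsInBall_pow_le_and_card_eq hj
    (eval_divByMonic_pow_rootMultiplicity_ne_zero c hC₀)
    (eval_divByMonic_pow_rootMultiplicity_ne_zero c hf)
  obtain ⟨σ, hσ, hball⟩ := Metric.eventually_nhds_iff.1 (eventually_nhdsWithin_iff.1 hcard)
  refine ⟨δ, hδ, σ, hσ, M, hM, fun ε hε₀ hεσ => ?_⟩
  have hε : ε ≠ 0 := norm_pos_iff.1 hε₀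
  rw [filter_roots_add_C_mul hf hj hsj hε]
  refine ⟨hball (by rwa [dist_zero_right]) hε, fun z hz hz₀ hzδ => hbound ε z ?_⟩
  rw [← filter_roots_add_C_mul hf hj hsj hε]
  exact mem_filter.2 ⟨hz, hz₀, hzδ⟩

end Polynomial

theorem stmt2_general (C₀ f : Polynomial ℂ) (hf : f ≠ 0)
    (l₀ : ℂ) (s t : ℕ)
    (hs : C₀.rootMultiplicity l₀ = s)
    (ht : f.rootMultiplicity l₀ = t)
    (Cp : ℂ → Polynomial ℂ) (hCp : ∀ ε : ℂ, Cp ε = C₀ + Polynomial.C ε * f) :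
    (s ≤ t → ∀ ε : ℂ, (Polynomial.X - Polynomial.C l₀) ^ s ∣ Cp ε) ∧
    ((t : ℤ) = (s : ℤ) - 1 →
      (∀ ε : ℂ, ε ≠ 0 → ((Cp ε).rootMultiplicity l₀ : ℤ) = (s : ℤ) - 1) ∧
      ∃ δ > (0 : ℝ), ∃ σ > (0 : ℝ), ∃ M > (0 : ℝ), ∀ ε : ℂ, 0 < ‖ε‖ → ‖ε‖ < σ →
        (((Cp ε).roots.filter fun z => 0 < ‖z - l₀‖ ∧ ‖z - l₀‖ < δ).card = 1 ∧
          ∀ z ∈ (Cp ε).roots, 0 < ‖z - l₀‖ → ‖z - l₀‖ < δ → ‖z - l₀‖ ≤ M * ‖ε‖)) ∧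
    ((t : ℤ) = (s : ℤ) - 2 →
      (∀ ε : ℂ, ε ≠ 0 → ((Cp ε).rootMultiplicity l₀ : ℤ) = (s : ℤ) - 2) ∧
      ∃ δ > (0 : ℝ), ∃ σ > (0 : ℝ), ∃ M > (0 : ℝ), ∀ ε : ℂ, 0 < ‖ε‖ → ‖ε‖ < σ →
        (((Cp ε).roots.filter fun z => 0 < ‖z - l₀‖ ∧ ‖z - l₀‖ < δ).card = 2 ∧
          ∀ z ∈ (Cp ε).roots, 0 < ‖z - l₀‖ → ‖z - l₀‖ < δ →
            ‖z - l₀‖ ≤ M * Real.sqrt ‖ε‖)) := by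
  simp only [hCp]
  subst hs ht
  refine ⟨fun hst ε => dvd_add (pow_rootMultiplicity_dvd C₀ l₀)
    (((pow_dvd_pow _ hst).trans (pow_rootMultiplicity_dvd f l₀)).mul_left _), fun h1 => ?_,
    fun h2 => ?_⟩
  · have hsj : C₀.rootMultiplicity l₀ = f.rootMultiplicity l₀ + 1 := by omega
    refine ⟨fun ε hε => by rw [rootMultiplicity_add_C_mul hf one_ne_zero hsj hε, h1], ?_⟩
    simpa using exists_card_roots_near_add_C_mul hf one_ne_zero hsj
  · have hsj : C₀.rootMultiplicity l₀ = f.rootMultiplicity l₀ + 2 := by omega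
    refine ⟨fun ε hε => by rw [rootMultiplicity_add_C_mul hf two_ne_zero hsj hε, h2], ?_⟩
    obtain ⟨δ, hδ, σ, hσ, M, hM, hroots⟩ := exists_card_roots_near_add_C_mul hf two_ne_zero hsj
    refine ⟨δ, hδ, σ, hσ, √M, Real.sqrt_pos.2 hM, fun ε hε₀ hεσ => ⟨(hroots ε hε₀ hεσ).1,
      fun z hz hz₀ hzδ => ?_⟩⟩
    rw [← Real.sqrt_mul hM.le, Real.le_sqrt (norm_nonneg _) (by positivity)]
    exact (hroots ε hε₀ hεσ).2 z hz hz₀ hzδ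

/-- The three-case theorem (Theorem 4.5): for `C(z,ε) = C₀(z) + ε·f(z)` with `λ₀` a root of
`C₀` of multiplicity `s` and of `f` of multiplicity `t ≥ s − 2`, either (i) `t ≥ s` and all
`s` roots in the `λ₀` family stay at `λ₀`; or (ii) `t = s−1`, `λ₀` keeps multiplicity `s−1`
and exactly one nearby root moves, at speed `O(ε)`; or (iii) `t = s−2`, `λ₀` keeps
multiplicity `s−2` and exactly two nearby roots move, at speed `O(√ε)`. -/
theorem stmt2 (C₀ f : Polynomial ℂ) (hC₀ : C₀ ≠ 0) (hf : f ≠ 0)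
    (l₀ : ℂ) (s t : ℕ)
    (hs : C₀.rootMultiplicity l₀ = s) (hs1 : 1 ≤ s)
    (ht : f.rootMultiplicity l₀ = t)
    (hts : (s : ℤ) - 2 ≤ (t : ℤ))
    (Cp : ℂ → Polynomial ℂ) (hCp : ∀ ε : ℂ, Cp ε = C₀ + Polynomial.C ε * f) :
    (s ≤ t → ∀ ε : ℂ, (Polynomial.X - Polynomial.C l₀) ^ s ∣ Cp ε) ∧
    ((t : ℤ) = (s : ℤ) - 1 →
      (∀ ε : ℂ, ε ≠ 0 → ((Cp ε).rootMultiplicity l₀ : ℤ) = (s : ℤ) - 1) ∧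
      ∃ δ > (0 : ℝ), ∃ σ > (0 : ℝ), ∃ M > (0 : ℝ), ∀ ε : ℂ, 0 < ‖ε‖ → ‖ε‖ < σ →
        (((Cp ε).roots.filter fun z => 0 < ‖z - l₀‖ ∧ ‖z - l₀‖ < δ).card = 1 ∧
          ∀ z ∈ (Cp ε).roots, 0 < ‖z - l₀‖ → ‖z - l₀‖ < δ → ‖z - l₀‖ ≤ M * ‖ε‖)) ∧
    ((t : ℤ) = (s : ℤ) - 2 →
      (∀ ε : ℂ, ε ≠ 0 → ((Cp ε).rootMultiplicity l₀ : ℤ) = (s : ℤ) - 2) ∧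
      ∃ δ > (0 : ℝ), ∃ σ > (0 : ℝ), ∃ M > (0 : ℝ), ∀ ε : ℂ, 0 < ‖ε‖ → ‖ε‖ < σ →
        (((Cp ε).roots.filter fun z => 0 < ‖z - l₀‖ ∧ ‖z - l₀‖ < δ).card = 2 ∧
          ∀ z ∈ (Cp ε).roots, 0 < ‖z - l₀‖ → ‖z - l₀‖ < δ →
            ‖z - l₀‖ ≤ M * Real.sqrt ‖ε‖)) :=
  stmt2_general C₀ f hf l₀ s t hs ht Cp hCp
end

section
/- Let H ≥ 1 be an integer, let λ₀, A₁ ∈ ℂ with |λ₀| = 1 and A₁ ≠ 0, and set ω = e^{2πi/H}. Suppose that for each k ∈ {0, 1, …, H−1} there is a function λ_k, defined for all sufficiently small real ε > 0, such that |λ_k(ε)| = 1 for all sufficiently small ε > 0 and λ_k(ε) = λ₀ + A₁·ω^k·ε^{1/H} + o(ε^{1/H}) as ε → 0⁺, where ε^{1/H} denotes the positive real H-th root. Then H ≤ 2. (Theorem 4.1: eigenvalues of the unitary walk matrix U, whose characteristic polynomial is polynomial in both λ and ε, can only take the form λ(ε) = Σ_{j≥0} A_j ε^j or λ^{(k)}(ε)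 = Σ_{j≥0} (−1)^{jk} A_j (√ε)^j; no Puiseux cycle of length greater than 2 can occur.) -/
/-!
Each branch `ε ↦ λ₀ + A₁ ωᵏ ε^{1/H} + o(ε^{1/H})` is a curve on the unit circle, so, viewing `ℂ` as
the real plane, its tangent `A₁ ωᵏ` is orthogonal to `λ₀`. If `H ≥ 3` then `ω` is not real, so
`A₁` and `A₁ ω` span `ℂ` over `ℝ` and `λ₀ ≠ 0` would be orthogonal to everything.
-/

open Filter Topology InnerProductSpace

theorem inner_eq_zero_of_norm_eq_of_isLittleO {E α : Type*} [NormedAddCommGroup E]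
    [InnerProductSpace ℝ E] {L : Filter α} [L.NeBot] {t : α → ℝ} {x : α → E} {x₀ a : E}
    (ht : Tendsto t L (𝓝 0)) (htpos : ∀ᶠ s in L, 0 < t s) (hnorm : ∀ᶠ s in L, ‖x s‖ = ‖x₀‖)
    (hx : (fun s => x s - (x₀ + t s • a)) =o[L] t) : ⟪x₀, a⟫_ℝ = 0 := by
  set g : α → E := fun s => (t s)⁻¹ • (x s - x₀)
  have hg : Tendsto g L (𝓝 a) := by
    have := hx.tendsto_inv_smul_nhds_zero.const_add a
    rw [add_zero] at this
    refine this.congr' ?_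
    filter_upwards [htpos] with s hs
    simp only [g, smul_sub, smul_add, inv_smul_smul₀ hs.ne']
    abel
  -- expanding `‖x₀ + t • g‖² = ‖x₀‖²` and dividing by `t`
  have hzero : ∀ᶠ s in L, 2 * ⟪x₀, g s⟫_ℝ + t s * ‖g s‖ ^ 2 = 0 := by
    filter_upwards [htpos, hnorm] with s hs hns
    have hxs : x s = x₀ + t s • g s := by simp [g, smul_inv_smul₀ hs.ne']
    have := norm_add_sq_real x₀ (t s • g s)
    rw [← hxs, hns, real_inner_smul_right, norm_smul, Real.norm_of_nonneg hs.le] at this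
    have : t s * (2 * ⟪x₀, g s⟫_ℝ + t s * ‖g s‖ ^ 2) = 0 := by linear_combination -this
    exact (mul_eq_zero.mp this).resolve_left hs.ne'
  have hlim : Tendsto (fun s => 2 * ⟪x₀, g s⟫_ℝ + t s * ‖g s‖ ^ 2) L
      (𝓝 (2 * ⟪x₀, a⟫_ℝ + 0 * ‖a‖ ^ 2)) :=
    ((tendsto_const_nhds.inner hg).const_mul 2).add (ht.mul (hg.norm.pow 2))
  have := tendsto_nhds_unique (hlim.congr' hzero) tendsto_const_nhds
  linarith

theorem Complex.eq_zero_of_inner_eq_zero_of_inner_mul_eq_zero {w z ω : ℂ} (hω : ω.im ≠ 0)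
    (hw : w ≠ 0) (h₁ : ⟪w, z⟫_ℝ = 0) (h₂ : ⟪w, z * ω⟫_ℝ = 0) : z = 0 := by
  rw [Complex.inner] at h₁ h₂
  set c := z * (starRingEnd ℂ) w
  have hcω : (c * ω).re = 0 := by rw [← h₂, mul_right_comm z ω]
  rw [Complex.mul_re, h₁, zero_mul, zero_sub, neg_eq_zero] at hcω
  have hc : c = 0 := Complex.ext h₁ ((mul_eq_zero.mp hcω).resolve_right hω)
  simpa [c, hw] using hc

theorem Complex.exp_two_pi_mul_I_div_im_pos {n : ℕ} (hn : 3 ≤ n) :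
    0 < (Complex.exp (2 * Real.pi * Complex.I / n)).im := by
  have hn' : (3 : ℝ) ≤ n := by exact_mod_cast hn
  rw [show 2 * Real.pi * Complex.I / n = ((2 * Real.pi / n : ℝ) : ℂ) * Complex.I by
    push_cast; ring, Complex.exp_ofReal_mul_I_im]
  apply Real.sin_pos_of_pos_of_lt_pi (by positivity)
  rw [div_lt_iff₀ (by positivity)]
  nlinarith [Real.pi_pos]

theorem stmt3_general (H : ℕ) (l₀ A₁ : ℂ) (hl₀ : ‖l₀‖ = 1) (hA₁ : A₁ ≠ 0)
    (ω : ℂ) (hω : ω = Complex.exp (2 * Real.pi * Complex.I / (H : ℂ)))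
    (l : ℕ → ℝ → ℂ)
    (hmod : ∀ k < H, ∀ᶠ ε in nhdsWithin (0 : ℝ) (Set.Ioi 0), ‖l k ε‖ = 1)
    (hasym : ∀ k < H,
      (fun ε : ℝ => l k ε - (l₀ + A₁ * ω ^ k * ((ε ^ ((H : ℝ)⁻¹) : ℝ) : ℂ)))
        =o[nhdsWithin (0 : ℝ) (Set.Ioi 0)] fun ε : ℝ => ε ^ ((H : ℝ)⁻¹)) :
    H ≤ 2 := by
  by_contra! hH
  have hexp : 0 < (H : ℝ)⁻¹ := by positivity
  have ht : Tendsto (fun ε : ℝ => ε ^ (H : ℝ)⁻¹) (𝓝[>] 0) (𝓝 0) := by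
    simpa [Real.zero_rpow hexp.ne'] using
      ((Real.continuousAt_rpow_const 0 _ (Or.inr hexp.le)).tendsto).mono_left nhdsWithin_le_nhds
  have htpos : ∀ᶠ ε in 𝓝[>] (0 : ℝ), 0 < ε ^ (H : ℝ)⁻¹ :=
    eventually_mem_nhdsWithin.mono fun ε hε => Real.rpow_pos_of_pos hε _
  have horth : ∀ k < H, ⟪l₀, A₁ * ω ^ k⟫_ℝ = 0 := fun k hk =>
    inner_eq_zero_of_norm_eq_of_isLittleO ht htpos
      ((hmod k hk).mono fun ε hε => hε.trans hl₀.symm)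
      ((hasym k hk).congr_left fun ε => by rw [Complex.real_smul, mul_comm])
  refine hA₁ (Complex.eq_zero_of_inner_eq_zero_of_inner_mul_eq_zero (ω := ω) ?_
    (norm_ne_zero_iff.mp (hl₀ ▸ one_ne_zero)) (by simpa using horth 0 (by omega))
    (by simpa using horth 1 (by omega)))
  exact hω ▸ (Complex.exp_two_pi_mul_I_div_im_pos hH).ne'

/-- Theorem 4.1: a Puiseux cycle of `H` unimodular eigenvalue branches
`λ_k(ε) = λ₀ + A₁ω^k ε^{1/H} + o(ε^{1/H})` of a unitary walk matrix forces `H ≤ 2`. -/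
theorem stmt3 (H : ℕ) (hH : 1 ≤ H) (l₀ A₁ : ℂ) (hl₀ : ‖l₀‖ = 1) (hA₁ : A₁ ≠ 0)
    (ω : ℂ) (hω : ω = Complex.exp (2 * Real.pi * Complex.I / (H : ℂ)))
    (l : ℕ → ℝ → ℂ)
    (hmod : ∀ k < H, ∀ᶠ ε in nhdsWithin (0 : ℝ) (Set.Ioi 0), ‖l k ε‖ = 1)
    (hasym : ∀ k < H,
      (fun ε : ℝ => l k ε - (l₀ + A₁ * ω ^ k * ((ε ^ ((H : ℝ)⁻¹) : ℝ) : ℂ)))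
        =o[nhdsWithin (0 : ℝ) (Set.Ioi 0)] fun ε : ℝ => ε ^ ((H : ℝ)⁻¹)) :
    H ≤ 2 :=
  stmt3_general H l₀ A₁ hl₀ hA₁ ω hω l hmod hasym
end

section
/- Let n ∈ ℕ and work in ℂⁿ. Let U₀ be a unitary matrix, U₁ a matrix, c ∈ ℝ, and λ₀ ∈ ℂ with |λ₀| = 1. Suppose that for all sufficiently small real ε > 0 we are given a matrix U(ε), a vector V(ε) with ‖V(ε)‖ = 1, and λ(ε) ∈ ℂ with U(ε)·V(ε) = λ(ε)·V(ε), and that there are vectors V₀, V₁ ∈ ℂⁿ with ‖V₀‖ = 1 and U₀·V₀ = λ₀·V₀ such that, as ε → 0⁺: ‖U(ε) − U₀ − √ε·U₁‖ = O(ε), ‖V(ε) − V₀ − √ε·V₁‖ = O(ε), and |λ(ε) − λ₀(1 + ic√ε)| = O(ε). Then ⟨V₀, U₁·V₀⟩ = i·c·λ₀. (Theorem 4.7: paired eigenvectors straddle the hub; since U₁ only transmits between the Left and Right sides, ⟨V₀|U₁|V₀⟩ = icλ₀ ≠ 0 forces V₀ to have components on both sides.) -/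
/-!
Pairing the eigenvalue equation `U(ε)V(ε) = λ(ε)V(ε)` with `V₀` and using
`⟨V₀, U₀w⟩ = λ₀⟨V₀, w⟩` (for unitary `U₀`, `V₀` is an eigenvector of `U₀ᴴ` with eigenvalue
`conj λ₀`) cancels the terms of order one, leaving
`√ε (⟨V₀, U₁V(ε)⟩ - icλ₀⟨V₀, V(ε)⟩) = O(ε)`. Dividing by `√ε` and letting `V(ε) → V₀` gives
`⟨V₀, U₁V₀⟩ - icλ₀ = 0`.
-/

open Filter Topology Asymptotics Matrix

section Unitary

variable {𝕜 ι : Type*} [RCLike 𝕜] [Fintype ι] [DecidableEq ι] {U : Matrix ι ι 𝕜} {μ : 𝕜}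
  {v : EuclideanSpace 𝕜 ι}

theorem Matrix.toEuclideanLin_conjTranspose_apply_of_mem_unitaryGroup
    (hU : U ∈ unitaryGroup ι 𝕜) (hμ : ‖μ‖ = 1) (hv : toEuclideanLin U v = μ • v) :
    toEuclideanLin Uᴴ v = star μ • v := by
  have hUU : μ • toEuclideanLin Uᴴ v = v := by
    rw [← map_smul, ← hv, ← LinearMap.comp_apply, ← toLpLin_mul_same, ← star_eq_conjTranspose,
      hU.1, toLpLin_one, LinearMap.id_apply]
  calc toEuclideanLin Uᴴ v = (star μ * μ) • toEuclideanLin Uᴴ v := by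
        rw [RCLike.star_def, RCLike.conj_mul, hμ]; simp
    _ = star μ • v := by rw [mul_smul, hUU]

theorem Matrix.inner_toEuclideanLin_of_mem_unitaryGroup
    (hU : U ∈ unitaryGroup ι 𝕜) (hμ : ‖μ‖ = 1) (hv : toEuclideanLin U v = μ • v)
    (w : EuclideanSpace 𝕜 ι) :
    inner 𝕜 v (toEuclideanLin U w) = μ * inner 𝕜 v w := by
  rw [← LinearMap.adjoint_inner_left, ← toEuclideanLin_conjTranspose_eq_adjoint,
    toEuclideanLin_conjTranspose_apply_of_mem_unitaryGroup hU hμ hv, inner_smul_left,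
    RCLike.star_def, RCLike.conj_conj]

end Unitary

section InnerProductSpace

variable {𝕜 E : Type*} [RCLike 𝕜] [NormedAddCommGroup E] [InnerProductSpace 𝕜 E]

theorem mul_inner_sub_eq_of_apply_eq_smul {T T₀ T₁ : E →ₗ[𝕜] E} {v₀ v : E} {μ₀ μ κ s : 𝕜}
    (h₀ : ∀ w, inner 𝕜 v₀ (T₀ w) = μ₀ * inner 𝕜 v₀ w) (hv : T v = μ • v) :
    s * (inner 𝕜 v₀ (T₁ v) - κ * μ₀ * inner 𝕜 v₀ v)
      = (μ - μ₀ * (1 + κ * s)) * inner 𝕜 v₀ v - inner 𝕜 v₀ ((T - T₀ - s • T₁) v) := by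
  simp only [LinearMap.sub_apply, LinearMap.smul_apply, inner_sub_right, inner_smul_right, hv, h₀]
  ring

theorem isBigO_inner_apply_of_tendsto [FiniteDimensional 𝕜 E] {α : Type*} {l : Filter α}
    {T : α → E →ₗ[𝕜] E} {v : α → E} {w : E} {φ : α → ℝ}
    (hT : (fun x => ‖LinearMap.toContinuousLinearMap (T x)‖) =O[l] φ) (hv : Tendsto v l (𝓝 w))
    (v₀ : E) :
    (fun x => inner 𝕜 v₀ (T x (v x))) =O[l] φ := by
  refine (IsBigO.of_bound ‖v₀‖ (Eventually.of_forall fun x => ?_)).trans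
    (by simpa only [mul_one] using hT.mul (hv.norm.isBigO_one ℝ))
  rw [Real.norm_eq_abs, abs_of_nonneg (by positivity)]
  exact (norm_inner_le_norm _ _).trans (mul_le_mul_of_nonneg_left
    ((LinearMap.toContinuousLinearMap _).le_opNorm _) (norm_nonneg _))

end InnerProductSpace

theorem tendsto_zero_of_sqrt_smul_isBigO {F : Type*} [NormedAddCommGroup F] [NormedSpace ℝ F]
    {f : ℝ → F} (hf : (fun ε => √ε • f ε) =O[𝓝[>] 0] fun ε => ε) :
    Tendsto f (𝓝[>] 0) (𝓝 0) := by
  have h : f =O[𝓝[>] 0] fun ε => (√ε)⁻¹ • ε := by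
    refine ((isBigO_refl (fun ε : ℝ => (√ε)⁻¹) _).smul hf).congr' ?_ (by rfl)
    filter_upwards [self_mem_nhdsWithin] with ε (hε : 0 < ε)
    rw [smul_smul, inv_mul_cancel₀ (Real.sqrt_pos.mpr hε).ne', one_smul]
  refine h.trans_tendsto ?_
  simp_rw [smul_eq_mul, inv_mul_eq_div, Real.div_sqrt]
  simpa using (Real.continuous_sqrt.tendsto 0).mono_left nhdsWithin_le_nhds

theorem tendsto_of_isBigO_sub_sub_sqrt_smul {E : Type*} [NormedAddCommGroup E]
    [NormedSpace ℂ E] {f : ℝ → E} {a b : E}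
    (hf : (fun ε => f ε - a - (√ε : ℂ) • b) =O[𝓝[>] 0] fun ε => ε) :
    Tendsto f (𝓝[>] 0) (𝓝 a) := by
  have hsqrt : Tendsto (fun ε : ℝ => (√ε : ℂ)) (𝓝[>] 0) (𝓝 0) := by
    simpa using ((by fun_prop : Continuous fun ε : ℝ => (√ε : ℂ)).tendsto 0).mono_left
      nhdsWithin_le_nhds
  have hrem := hf.trans_tendsto (tendsto_nhdsWithin_of_tendsto_nhds tendsto_id)
  rw [← tendsto_sub_nhds_zero_iff]
  simpa using hrem.add (hsqrt.smul_const b)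

theorem stmt4_general (n : ℕ) (U₀ U₁ : Matrix (Fin n) (Fin n) ℂ)
    (hU₀ : U₀ ∈ Matrix.unitaryGroup (Fin n) ℂ)
    (c : ℝ) (l₀ : ℂ) (hl₀ : ‖l₀‖ = 1)
    (U : ℝ → Matrix (Fin n) (Fin n) ℂ)
    (V : ℝ → EuclideanSpace ℂ (Fin n)) (l : ℝ → ℂ)
    (heig : ∀ᶠ ε in nhdsWithin (0 : ℝ) (Set.Ioi 0),
      Matrix.toEuclideanLin (U ε) (V ε) = l ε • V ε)
    (V₀ V₁ : EuclideanSpace ℂ (Fin n)) (hV₀norm : ‖V₀‖ = 1)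
    (heig0 : Matrix.toEuclideanLin U₀ V₀ = l₀ • V₀)
    (hUO : (fun ε : ℝ =>
        ‖LinearMap.toContinuousLinearMap
          (Matrix.toEuclideanLin (U ε - U₀ - ((Real.sqrt ε : ℂ)) • U₁))‖)
        =O[nhdsWithin (0 : ℝ) (Set.Ioi 0)] fun ε : ℝ => ε)
    (hVO : (fun ε : ℝ => V ε - V₀ - ((Real.sqrt ε : ℂ)) • V₁)
        =O[nhdsWithin (0 : ℝ) (Set.Ioi 0)] fun ε : ℝ => ε)
    (hlO : (fun ε : ℝ => l ε - l₀ * (1 + Complex.I * c * Real.sqrt ε))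
        =O[nhdsWithin (0 : ℝ) (Set.Ioi 0)] fun ε : ℝ => ε) :
    (inner ℂ V₀ (Matrix.toEuclideanLin U₁ V₀) : ℂ) = Complex.I * c * l₀ := by
  have hV := tendsto_of_isBigO_sub_sub_sqrt_smul hVO
  have hinner : Tendsto (fun ε => inner ℂ V₀ (V ε)) (𝓝[>] 0) (𝓝 1) := by
    simpa [inner_self_eq_norm_sq_to_K, hV₀norm] using (tendsto_const_nhds (x := V₀)).inner (𝕜 := ℂ) hV
  set g : ℝ → ℂ := fun ε =>
    inner ℂ V₀ (toEuclideanLin U₁ (V ε)) - Complex.I * c * l₀ * inner ℂ V₀ (V ε)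
  have hg : Tendsto g (𝓝[>] 0)
      (𝓝 (inner ℂ V₀ (toEuclideanLin U₁ V₀) - Complex.I * c * l₀ * 1)) :=
    ((tendsto_const_nhds (x := V₀)).inner (𝕜 := ℂ)
      (((toEuclideanLin U₁).continuous_of_finiteDimensional.tendsto V₀).comp hV)).sub
      (hinner.const_mul _)
  have hl : (fun ε => (l ε - l₀ * (1 + Complex.I * c * √ε)) * inner ℂ V₀ (V ε))
      =O[𝓝[>] 0] fun ε => ε := by
    simpa only [mul_one] using hlO.mul (hinner.isBigO_one ℝ)
  have hg₀ : Tendsto g (𝓝[>] 0) (𝓝 0) := by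
    refine tendsto_zero_of_sqrt_smul_isBigO
      ((hl.sub (isBigO_inner_apply_of_tendsto hUO hV V₀)).congr' ?_ (by rfl))
    filter_upwards [heig] with ε hε
    rw [Complex.real_smul, mul_inner_sub_eq_of_apply_eq_smul
      (inner_toEuclideanLin_of_mem_unitaryGroup hU₀ hl₀ heig0) hε]
    simp only [map_sub, map_smul]
  rw [← sub_eq_zero, ← mul_one (Complex.I * c * l₀)]
  exact tendsto_nhds_unique hg hg₀

/-- Theorem 4.7: paired eigenvectors straddle the hub. If `U(ε) = U₀ + √ε U₁ + O(ε)` has a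
unit eigenvector `V(ε) = V₀ + √ε V₁ + O(ε)` with eigenvalue `λ(ε) = λ₀(1 + ic√ε) + O(ε)`,
where `U₀V₀ = λ₀V₀`, then `⟨V₀, U₁V₀⟩ = icλ₀`. -/
theorem stmt4 (n : ℕ) (U₀ U₁ : Matrix (Fin n) (Fin n) ℂ)
    (hU₀ : U₀ ∈ Matrix.unitaryGroup (Fin n) ℂ)
    (c : ℝ) (l₀ : ℂ) (hl₀ : ‖l₀‖ = 1)
    (U : ℝ → Matrix (Fin n) (Fin n) ℂ)
    (V : ℝ → EuclideanSpace ℂ (Fin n)) (l : ℝ → ℂ)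
    (hVnorm : ∀ᶠ ε in nhdsWithin (0 : ℝ) (Set.Ioi 0), ‖V ε‖ = 1)
    (heig : ∀ᶠ ε in nhdsWithin (0 : ℝ) (Set.Ioi 0),
      Matrix.toEuclideanLin (U ε) (V ε) = l ε • V ε)
    (V₀ V₁ : EuclideanSpace ℂ (Fin n)) (hV₀norm : ‖V₀‖ = 1)
    (heig0 : Matrix.toEuclideanLin U₀ V₀ = l₀ • V₀)
    (hUO : (fun ε : ℝ =>
        ‖LinearMap.toContinuousLinearMap
          (Matrix.toEuclideanLin (U ε - U₀ - ((Real.sqrt ε : ℂ)) • U₁))‖)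
        =O[nhdsWithin (0 : ℝ) (Set.Ioi 0)] fun ε : ℝ => ε)
    (hVO : (fun ε : ℝ => V ε - V₀ - ((Real.sqrt ε : ℂ)) • V₁)
        =O[nhdsWithin (0 : ℝ) (Set.Ioi 0)] fun ε : ℝ => ε)
    (hlO : (fun ε : ℝ => l ε - l₀ * (1 + Complex.I * c * Real.sqrt ε))
        =O[nhdsWithin (0 : ℝ) (Set.Ioi 0)] fun ε : ℝ => ε) :
    (inner ℂ V₀ (Matrix.toEuclideanLin U₁ V₀) : ℂ) = Complex.I * c * l₀ :=
  stmt4_general n U₀ U₁ hU₀ c l₀ hl₀ U V l heig V₀ V₁ hV₀norm heig0 hUO hVO hlO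
end

section
/- Let n, j ∈ ℕ, K > 0, and ε₁ > 0. Suppose for each real ε ∈ (0,ε₁) we are given a unitary matrix U(ε) on ℂⁿ, complex numbers λ₁(ε), …, λ_j(ε), and unit vectors V₁(ε), …, V_j(ε) with U(ε)·V_i(ε) = λ_i(ε)·V_i(ε) for each i, together with an orthonormal family V₁(0), …, V_j(0) in ℂⁿ satisfying ‖V_i(ε) − V_i(0)‖ ≤ K·√ε for all i and all ε ∈ (0,ε₁). Let S = span{V₁(0), …, V_j(0)} and let P_{S⊥} be the orthogonal projection onto the orthogonal complement of S. Then there is a constant K′ > 0 such that for every u ∈ S with ‖u‖ ≤ 1, every m ∈ ℕ, and every ε ∈ (0,ε₁): ‖P_{S⊥}·U(ε)^m·u‖ ≤ K′·√ε. (Theorem 4.4: a state initialized in the span of the ε = 0 eigenvectors stays in that span, up to an error O(√ε), under arbitrarily many applications of U.) -/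
/-!
Write `u = ∑ cᵢ V0ᵢ` with `‖cᵢ‖ ≤ 1` and compare it with `w = ∑ cᵢ Vᵢ(ε)`, which is within
`j K √ε` of `u`. Since the `Vᵢ(ε)` are eigenvectors of the unitary `U(ε)`, we get
`U(ε)^m w = ∑ cᵢ λᵢ^m Vᵢ(ε)` with `‖λᵢ‖ = 1`, which is within `j K √ε` of `∑ cᵢ λᵢ^m V0ᵢ ∈ S`.
As `U(ε)^m` is an isometry, `U(ε)^m u` lies within `2 j K √ε` of `S`, uniformly in `m`.
-/

open Finset Module End

theorem norm_sum_smul_le_card_mul {𝕜 E ι : Type*} [NormedField 𝕜] [SeminormedAddCommGroup E]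
    [NormedSpace 𝕜 E] [Fintype ι] {c : ι → 𝕜} {x : ι → E} {δ : ℝ}
    (hc : ∀ i, ‖c i‖ ≤ 1) (hx : ∀ i, ‖x i‖ ≤ δ) :
    ‖∑ i, c i • x i‖ ≤ Fintype.card ι * δ := by
  calc ‖∑ i, c i • x i‖ ≤ ∑ i, ‖c i • x i‖ := norm_sum_le _ _
    _ ≤ ∑ _i : ι, δ := sum_le_sum fun i _ => by
        rw [norm_smul]
        exact (mul_le_of_le_one_left (norm_nonneg _) (hc i)).trans (hx i)
    _ = Fintype.card ι * δ := by simp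

theorem Module.End.HasEigenvector.pow {R M : Type*} [CommRing R] [AddCommGroup M] [Module R M]
    {f : End R M} {μ : R} {v : M} (hv : f.HasEigenvector μ v) (m : ℕ) :
    (f ^ m).HasEigenvector (μ ^ m) v :=
  hasEigenvector_iff.mpr ⟨mem_eigenspace_iff.mpr (hv.pow_apply m), hv.2⟩

theorem Module.End.HasEigenvector.norm_le_one {𝕜 E : Type*} [NormedField 𝕜]
    [NormedAddCommGroup E] [NormedSpace 𝕜 E] {T : End 𝕜 E} (hT : ∀ x, ‖T x‖ ≤ ‖x‖)
    {v : E} {μ : 𝕜} (hv : T.HasEigenvector μ v) : ‖μ‖ ≤ 1 := by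
  have := hT v
  rw [hv.apply_eq_smul, norm_smul] at this
  exact (mul_le_iff_le_one_left (norm_pos_iff.mpr hv.2)).mp this

section

variable {𝕜 E ι : Type*} [RCLike 𝕜] [NormedAddCommGroup E] [InnerProductSpace 𝕜 E] [Fintype ι]

theorem Orthonormal.exists_sum_smul_eq_of_mem_span {v : ι → E} (hv : Orthonormal 𝕜 v)
    {u : E} (hu : u ∈ Submodule.span 𝕜 (Set.range v)) :
    ∃ c : ι → 𝕜, ∑ i, c i • v i = u ∧ ∀ i, ‖c i‖ ≤ ‖u‖ := by
  obtain ⟨c, rfl⟩ := (Submodule.mem_span_range_iff_exists_fun 𝕜).mp hu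
  refine ⟨c, rfl, fun i => ?_⟩
  calc ‖c i‖ = ‖inner 𝕜 (v i) (∑ i, c i • v i)‖ := by rw [hv.inner_right_fintype]
    _ ≤ ‖v i‖ * ‖∑ i, c i • v i‖ := norm_inner_le_norm _ _
    _ = ‖∑ i, c i • v i‖ := by rw [hv.1 i, one_mul]

theorem exists_mem_span_norm_apply_sub_le_of_hasEigenvector {T : End 𝕜 E}
    (hT : ∀ x, ‖T x‖ ≤ ‖x‖) {v v₀ : ι → E} {μ : ι → 𝕜} {δ : ℝ}
    (hv : ∀ i, T.HasEigenvector (μ i) (v i)) (hv₀ : Orthonormal 𝕜 v₀)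
    (hδ : ∀ i, ‖v i - v₀ i‖ ≤ δ) {u : E} (hu : u ∈ Submodule.span 𝕜 (Set.range v₀))
    (hu₁ : ‖u‖ ≤ 1) :
    ∃ z ∈ Submodule.span 𝕜 (Set.range v₀), ‖T u - z‖ ≤ 2 * Fintype.card ι * δ := by
  obtain ⟨c, rfl, hc⟩ := hv₀.exists_sum_smul_eq_of_mem_span hu
  replace hc i : ‖c i‖ ≤ 1 := (hc i).trans hu₁
  have hcμ i : ‖c i * μ i‖ ≤ 1 := by
    rw [norm_mul]
    exact mul_le_one₀ (hc i) (norm_nonneg _) ((hv i).norm_le_one hT)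
  refine ⟨∑ i, (c i * μ i) • v₀ i,
    Submodule.sum_mem _ fun i _ => Submodule.smul_mem _ _ (Submodule.subset_span ⟨i, rfl⟩), ?_⟩
  have hTw : T (∑ i, c i • v i) = ∑ i, (c i * μ i) • v i := by
    simp only [map_sum, map_smul, (hv _).apply_eq_smul, smul_smul]
  have h₁ : ‖∑ i, c i • v₀ i - ∑ i, c i • v i‖ ≤ Fintype.card ι * δ := by
    simp_rw [← sum_sub_distrib, ← smul_sub]
    exact norm_sum_smul_le_card_mul hc fun i => norm_sub_rev (v i) (v₀ i) ▸ hδ i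
  have h₂ : ‖∑ i, (c i * μ i) • v i - ∑ i, (c i * μ i) • v₀ i‖ ≤ Fintype.card ι * δ := by
    simp_rw [← sum_sub_distrib, ← smul_sub]
    exact norm_sum_smul_le_card_mul hcμ hδ
  calc ‖T (∑ i, c i • v₀ i) - ∑ i, (c i * μ i) • v₀ i‖
      = ‖T (∑ i, c i • v₀ i - ∑ i, c i • v i)
          + (∑ i, (c i * μ i) • v i - ∑ i, (c i * μ i) • v₀ i)‖ := by
        rw [map_sub, hTw, sub_add_sub_cancel]
    _ ≤ ‖∑ i, c i • v₀ i - ∑ i, c i • v i‖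
          + ‖∑ i, (c i * μ i) • v i - ∑ i, (c i * μ i) • v₀ i‖ :=
        (norm_add_le _ _).trans (add_le_add_left (hT _) _)
    _ ≤ 2 * Fintype.card ι * δ := by linarith

theorem Submodule.norm_orthogonalProjectionOnto_orthogonal_le {S : Submodule 𝕜 E}
    [S.HasOrthogonalProjection] (x : E) {z : E} (hz : z ∈ S) :
    ‖Sᗮ.orthogonalProjectionOnto x‖ ≤ ‖x - z‖ := by
  calc ‖Sᗮ.orthogonalProjectionOnto x‖ = ‖Sᗮ.orthogonalProjectionOnto (x - z)‖ := by
        rw [map_sub, S.orthogonalProjectionOnto_orthogonal_apply_eq_zero hz, sub_zero]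
    _ ≤ ‖x - z‖ := Sᗮ.norm_orthogonalProjectionOnto_apply_le _

end

section

variable {n 𝕜 : Type*} [RCLike 𝕜] [Fintype n] [DecidableEq n]

theorem Matrix.norm_toEuclideanLin_apply_of_mem_unitaryGroup {A : Matrix n n 𝕜}
    (hA : A ∈ Matrix.unitaryGroup n 𝕜) (x : EuclideanSpace 𝕜 n) :
    ‖Matrix.toEuclideanLin A x‖ = ‖x‖ :=
  (Matrix.toEuclideanCLM (n := n) (𝕜 := 𝕜) A).norm_map_of_mem_unitary
    (Unitary.map_mem Matrix.toEuclideanCLM hA) x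

theorem Matrix.toEuclideanLin_pow (A : Matrix n n 𝕜) (m : ℕ) :
    Matrix.toEuclideanLin (A ^ m) = Matrix.toEuclideanLin A ^ m := by
  rw [← Matrix.coe_toEuclideanCLM_eq_toEuclideanLin, map_pow, ContinuousLinearMap.toLinearMap_pow]
  rfl

end

theorem stmt5_general (n j : ℕ) (K : ℝ) (hK : 0 < K) (ε₁ : ℝ)
    (U : ℝ → Matrix (Fin n) (Fin n) ℂ)
    (l : Fin j → ℝ → ℂ)
    (V : Fin j → ℝ → EuclideanSpace ℂ (Fin n))
    (V0 : Fin j → EuclideanSpace ℂ (Fin n))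
    (hU : ∀ ε ∈ Set.Ioo (0 : ℝ) ε₁, U ε ∈ Matrix.unitaryGroup (Fin n) ℂ)
    (hVnorm : ∀ i, ∀ ε ∈ Set.Ioo (0 : ℝ) ε₁, ‖V i ε‖ = 1)
    (heig : ∀ i, ∀ ε ∈ Set.Ioo (0 : ℝ) ε₁,
      Matrix.toEuclideanLin (U ε) (V i ε) = l i ε • V i ε)
    (hV0 : Orthonormal ℂ V0)
    (hclose : ∀ i, ∀ ε ∈ Set.Ioo (0 : ℝ) ε₁, ‖V i ε - V0 i‖ ≤ K * Real.sqrt ε) :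
    ∃ K' > (0 : ℝ), ∀ u ∈ Submodule.span ℂ (Set.range V0), ‖u‖ ≤ 1 →
      ∀ m : ℕ, ∀ ε ∈ Set.Ioo (0 : ℝ) ε₁,
        ‖Submodule.orthogonalProjection (Submodule.span ℂ (Set.range V0))ᗮ
            (Matrix.toEuclideanLin (U ε ^ m) u)‖ ≤ K' * Real.sqrt ε := by
  refine ⟨(2 * j + 1) * K, by positivity, fun u hu hu₁ m ε hε => ?_⟩
  have hV i : HasEigenvector (Matrix.toEuclideanLin (U ε ^ m)) (l i ε ^ m) (V i ε) := by
    rw [Matrix.toEuclideanLin_pow]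
    exact HasEigenvector.pow (hasEigenvector_iff.mpr ⟨mem_eigenspace_iff.mpr (heig i ε hε),
      norm_ne_zero_iff.mp (by simp [hVnorm i ε hε])⟩) m
  have hT x : ‖Matrix.toEuclideanLin (U ε ^ m) x‖ ≤ ‖x‖ :=
    (Matrix.norm_toEuclideanLin_apply_of_mem_unitaryGroup (pow_mem (hU ε hε) m) x).le
  obtain ⟨z, hz, hTz⟩ := 
    exists_mem_span_norm_apply_sub_le_of_hasEigenvector hT hV hV0 (hclose · ε hε) hu hu₁
  calc _ ≤ ‖Matrix.toEuclideanLin (U ε ^ m) u - z‖ :=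
        Submodule.norm_orthogonalProjectionOnto_orthogonal_le _ hz
    _ ≤ 2 * j * (K * Real.sqrt ε) := by simpa using hTz
    _ ≤ (2 * j + 1) * K * Real.sqrt ε := by nlinarith [Real.sqrt_nonneg ε]

/-- Theorem 4.4: a state initialized in the span `S` of the `ε = 0` eigenvectors stays in
that span, up to an error `O(√ε)`, under arbitrarily many applications of `U(ε)`:
`‖P_{S⊥} U(ε)^m u‖ ≤ K′√ε`. -/
theorem stmt5 (n j : ℕ) (K : ℝ) (hK : 0 < K) (ε₁ : ℝ) (hε₁ : 0 < ε₁)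
    (U : ℝ → Matrix (Fin n) (Fin n) ℂ)
    (l : Fin j → ℝ → ℂ)
    (V : Fin j → ℝ → EuclideanSpace ℂ (Fin n))
    (V0 : Fin j → EuclideanSpace ℂ (Fin n))
    (hU : ∀ ε ∈ Set.Ioo (0 : ℝ) ε₁, U ε ∈ Matrix.unitaryGroup (Fin n) ℂ)
    (hVnorm : ∀ i, ∀ ε ∈ Set.Ioo (0 : ℝ) ε₁, ‖V i ε‖ = 1)
    (heig : ∀ i, ∀ ε ∈ Set.Ioo (0 : ℝ) ε₁,
      Matrix.toEuclideanLin (U ε) (V i ε) = l i ε • V i ε)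
    (hV0 : Orthonormal ℂ V0)
    (hclose : ∀ i, ∀ ε ∈ Set.Ioo (0 : ℝ) ε₁, ‖V i ε - V0 i‖ ≤ K * Real.sqrt ε) :
    ∃ K' > (0 : ℝ), ∀ u ∈ Submodule.span ℂ (Set.range V0), ‖u‖ ≤ 1 →
      ∀ m : ℕ, ∀ ε ∈ Set.Ioo (0 : ℝ) ε₁,
        ‖Submodule.orthogonalProjection (Submodule.span ℂ (Set.range V0))ᗮ
            (Matrix.toEuclideanLin (U ε ^ m) u)‖ ≤ K' * Real.sqrt ε :=
  stmt5_general n j K hK ε₁ U l V V0 hU hVnorm heig hV0 hclose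
end

section
/- Let P(z,ε) = Σ_{j=0}^d a_j(ε)·z^j, where each a_j(ε) is a polynomial in ε with complex coefficients. Suppose a_d(0) ≠ 0 and the one-variable polynomial P(z,0) has d pairwise distinct (hence simple) roots λ^{(1)}, …, λ^{(d)} ∈ ℂ. Then there exists an open disk D ⊆ ℂ centered at 0 and d analytic functions f^{(1)}, …, f^{(d)} : D → ℂ such that: (i) P(f^{(k)}(ε), ε) = 0 for all ε ∈ D and all k; (ii) f^{(k)}(0) = λ^{(k)} for all k; and (iii) for every ε ∈ D and every λ ∈ ℂ with P(λ,ε) = 0, there is some k with λ = f^{(k)}(ε). (Theorem 3.2: simple zeros of a polynomial whose coefficients depend polynomially on a parameter extend to analytic root functions that account for all roots near 0.) -/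
/-!
A simple root of `P(·, 0)` is a point where `∂P/∂z ≠ 0`, so the analytic implicit function
theorem continues it to an analytic root branch near `ε = 0`. Near `0` the `d` branches stay
pairwise distinct and the leading coefficient stays nonzero; since `P(·, ε)` then has at most `d`
roots, the branches account for all of them.
-/

open Filter Topology Function Polynomial Finset
open scoped ContDiff

section Implicit

variable {𝕜 : Type*} [RCLike 𝕜]
  {E₁ : Type*} [NormedAddCommGroup E₁] [NormedSpace 𝕜 E₁] [CompleteSpace E₁]
  {E₂ : Type*} [NormedAddCommGroup E₂] [NormedSpace 𝕜 E₂] [CompleteSpace E₂]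
  {F : Type*} [NormedAddCommGroup F] [NormedSpace 𝕜 F] [CompleteSpace F]

theorem AnalyticAt.exists_implicitFunction {f : E₁ × E₂ → F} {u : E₁ × E₂}
    (hf : AnalyticAt 𝕜 f u) (hf₂ : (fderiv 𝕜 f u ∘L .inr 𝕜 E₁ E₂).IsInvertible) :
    ∃ ψ : E₁ → E₂, AnalyticAt 𝕜 ψ u.1 ∧ ψ u.1 = u.2 ∧ ∀ᶠ x in 𝓝 u.1, f (x, ψ x) = f u :=
  have hf' : ContDiffAt 𝕜 ω f u := hf.contDiffAt
  ⟨hf'.implicitFunction (by simp) hf₂, (hf'.contDiffAt_implicitFunction _ hf₂).analyticAt,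
    hf'.implicitFunction_apply_self _ hf₂, hf'.eventually_apply_implicitFunction _ hf₂⟩

theorem AnalyticAt.exists_implicitFunction_of_deriv_ne_zero {g : E₁ × 𝕜 → 𝕜} {u : E₁ × 𝕜}
    (hg : AnalyticAt 𝕜 g u) (hu : g u = 0) (hderiv : deriv (fun z ↦ g (u.1, z)) u.2 ≠ 0) :
    ∃ ψ : E₁ → 𝕜, AnalyticAt 𝕜 ψ u.1 ∧ ψ u.1 = u.2 ∧ ∀ᶠ x in 𝓝 u.1, g (x, ψ x) = 0 := by
  have hpartial : HasFDerivAt (fun z ↦ g (u.1, z)) (fderiv 𝕜 g u ∘L .inr 𝕜 E₁ 𝕜) u.2 :=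
    hg.differentiableAt.hasFDerivAt.comp u.2 (hasFDerivAt_prodMk_right u.1 u.2)
  have hinv : (fderiv 𝕜 g u ∘L .inr 𝕜 E₁ 𝕜).IsInvertible := by
    refine ⟨ContinuousLinearEquiv.unitsEquivAut 𝕜 (Units.mk0 _ hderiv), ?_⟩
    ext
    simp [hpartial.hasDerivAt.deriv]
  simpa [hu] using hg.exists_implicitFunction hinv

end Implicit

theorem eventually_injective_of_continuousAt {ι X Y : Type*} [Finite ι] [TopologicalSpace X]
    [TopologicalSpace Y] [T2Space Y] {f : ι → X → Y} {x : X} (hf : ∀ i, ContinuousAt (f i) x)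
    (hinj : Injective fun i ↦ f i x) : ∀ᶠ y in 𝓝 x, Injective fun i ↦ f i y := by
  have hne : ∀ᶠ y in 𝓝 x, ∀ i j, i ≠ j → f i y ≠ f j y := by
    simp only [eventually_all]
    intro i j
    rcases eq_or_ne i j with rfl | hij
    · exact fun h ↦ absurd rfl h
    · exact fun _ ↦ ((hf i).prodMk_nhds (hf j)).eventually
        (isClosed_diagonal.isOpen_compl.mem_nhds (hinj.ne hij))
  exact hne.mono fun y hy i j h ↦ by_contra fun hij ↦ hy i j hij h

namespace Polynomial

section Roots

variable {R : Type*} [CommRing R] [IsDomain R] {p : R[X]} {n : ℕ} {l : Fin n → R}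

theorem roots_eq_map_of_injective (hp : p ≠ 0) (hdeg : p.natDegree ≤ n) (hl : Injective l)
    (hroots : ∀ k, p.IsRoot (l k)) : p.roots = (univ.val.map l : Multiset R) := by
  have hnodup : (univ.val.map l).Nodup := univ.nodup.map hl
  have hle : univ.val.map l ≤ p.roots :=
    (Multiset.le_iff_subset hnodup).2 fun z hz ↦ by
      obtain ⟨k, -, rfl⟩ := Multiset.mem_map.1 hz
      exact (mem_roots hp).2 (hroots k)
  refine (Multiset.eq_of_le_of_card_le hle ?_).symm
  simpa using p.card_roots'.trans hdeg

theorem exists_eq_of_injective_roots (hp : p ≠ 0) (hdeg : p.natDegree ≤ n) (hl : Injective l)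
    (hroots : ∀ k, p.IsRoot (l k)) {z : R} (hz : p.IsRoot z) : ∃ k, z = l k := by
  have hz : z ∈ p.roots := (mem_roots hp).2 hz
  rw [roots_eq_map_of_injective hp hdeg hl hroots] at hz
  obtain ⟨k, -, rfl⟩ := Multiset.mem_map.1 hz
  exact ⟨k, rfl⟩

theorem eval_derivative_ne_zero_of_injective_roots (hp : p ≠ 0) (hdeg : p.natDegree ≤ n)
    (hl : Injective l) (hroots : ∀ k, p.IsRoot (l k)) (k : Fin n) :
    p.derivative.eval (l k) ≠ 0 := by
  classical
  intro hk
  have hnodup : p.roots.Nodup := by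
    rw [roots_eq_map_of_injective hp hdeg hl hroots]
    exact univ.nodup.map hl
  have hmult : 1 < p.rootMultiplicity (l k) :=
    (one_lt_rootMultiplicity_iff_isRoot hp).2 ⟨hroots k, hk⟩
  rw [← count_roots] at hmult
  have := Multiset.nodup_iff_count_le_one.1 hnodup (l k)
  omega

end Roots

variable {R : Type*} [Semiring R]

theorem coeff_sum_range_C_mul_X_pow (c : ℕ → R) {n j : ℕ} (hj : j < n) :
    (∑ i ∈ range n, C (c i) * X ^ i).coeff j = c j := by
  simp [hj]

theorem natDegree_sum_range_C_mul_X_pow_le (c : ℕ → R) (n : ℕ) :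
    (∑ i ∈ range (n + 1), C (c i) * X ^ i).natDegree ≤ n :=
  natDegree_sum_le_of_forall_le _ _ fun _ hi ↦
    (natDegree_C_mul_X_pow_le _ _).trans (Nat.lt_succ_iff.1 (mem_range.1 hi))

theorem analyticAt_eval_sum_C_mul_X_pow {𝕜 : Type*} [NontriviallyNormedField 𝕜] (a : ℕ → 𝕜[X])
    (s : Finset ℕ) (u : 𝕜 × 𝕜) :
    AnalyticAt 𝕜 (fun p : 𝕜 × 𝕜 ↦ (∑ j ∈ s, C ((a j).eval p.1) * X ^ j).eval p.2) u := by
  simp only [eval_finsetSum, eval_mul, eval_C, eval_pow, eval_X]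
  exact Finset.analyticAt_fun_sum _ fun j _ ↦
    (analyticAt_fst.aeval_polynomial (a j)).mul (analyticAt_snd.pow j)

end Polynomial

/-- Theorem 3.2: if `P(z,ε) = Σ a_j(ε)z^j` with polynomial coefficients, `a_d(0) ≠ 0`, and
`P(z,0)` has `d` pairwise distinct roots `λ^{(k)}`, then on some disk around `0` there are
`d` analytic root functions `f^{(k)}` with `f^{(k)}(0) = λ^{(k)}` accounting for all roots. -/
theorem stmt7 (d : ℕ) (a : ℕ → Polynomial ℂ)
    (P : ℂ → Polynomial ℂ)
    (hP : ∀ ε : ℂ, P ε = ∑ j ∈ Finset.range (d + 1),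
        Polynomial.C ((a j).eval ε) * Polynomial.X ^ j)
    (had : (a d).eval 0 ≠ 0)
    (l : Fin d → ℂ) (hinj : Function.Injective l)
    (hroots : ∀ k, (P 0).IsRoot (l k)) :
    ∃ D > (0 : ℝ), ∃ f : Fin d → ℂ → ℂ,
      (∀ k, AnalyticOnNhd ℂ (f k) (Metric.ball 0 D)) ∧
      (∀ k, ∀ ε ∈ Metric.ball (0 : ℂ) D, (P ε).IsRoot (f k ε)) ∧
      (∀ k, f k 0 = l k) ∧
      (∀ ε ∈ Metric.ball (0 : ℂ) D, ∀ z : ℂ, (P ε).IsRoot z → ∃ k, z = f k ε) := by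
  set g : ℂ × ℂ → ℂ := fun p ↦ (P p.1).eval p.2
  have hg : ∀ u, AnalyticAt ℂ g u := by
    simpa only [g, hP] using analyticAt_eval_sum_C_mul_X_pow a (range (d + 1))
  have hdeg : ∀ ε, (P ε).natDegree ≤ d := fun ε ↦
    hP ε ▸ natDegree_sum_range_C_mul_X_pow_le _ d
  have hne : ∀ ε, (a d).eval ε ≠ 0 → P ε ≠ 0 := fun ε hε hPε ↦ hε <| by
    rw [← coeff_sum_range_C_mul_X_pow (fun j ↦ (a j).eval ε) d.lt_succ_self, ← hP, hPε,
      coeff_zero]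
  have hsimple : ∀ k, deriv (fun z ↦ g (0, z)) (l k) ≠ 0 := fun k ↦ by
    simpa [g, Polynomial.deriv] using
      eval_derivative_ne_zero_of_injective_roots (hne 0 had) (hdeg 0) hinj hroots k
  choose f hf hf0 hfroot using fun k ↦
    (hg (0, l k)).exists_implicitFunction_of_deriv_ne_zero (hroots k) (hsimple k)
  have hbranches : ∀ᶠ ε in 𝓝 0, ∀ k, AnalyticAt ℂ (f k) ε ∧ g (ε, f k ε) = 0 :=
    eventually_all.2 fun k ↦ (hf k).eventually_analyticAt.and (hfroot k)
  have hdistinct : ∀ᶠ ε in 𝓝 0, Injective fun k ↦ f k ε :=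
    eventually_injective_of_continuousAt (fun k ↦ (hf k).continuousAt)
      ((funext hf0 : (fun k ↦ f k 0) = l) ▸ hinj)
  obtain ⟨D, hD, hball⟩ := Metric.eventually_nhds_iff_ball.1 <|
    hbranches.and (hdistinct.and ((a d).continuousAt.eventually_ne had))
  refine ⟨D, hD, f, fun k ε hε ↦ ((hball ε hε).1 k).1, fun k ε hε ↦ ((hball ε hε).1 k).2,
    hf0, fun ε hε z hz ↦ ?_⟩
  obtain ⟨hroot, hinjε, hlead⟩ := hball ε hε
  exact exists_eq_of_injective_roots (hne ε hlead) (hdeg ε) hinjε (fun k ↦ (hroot k).2) hz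
end

section
/- Let P(z,ε) be a polynomial in two complex variables z and ε which is irreducible as an element of ℂ[z,ε], has degree at least 1 in z, and whose leading coefficient in z is a nonzero constant. If for some ε₀ ∈ ℂ the one-variable polynomial P(·,ε₀) has a repeated root — that is, there exists z₀ ∈ ℂ with P(z₀,ε₀) = 0 and (∂P/∂z)(z₀,ε₀) = 0 — then there exists δ > 0 such that for all ε ∈ ℂ with 0 < |ε − ε₀| < δ, the polynomial P(·,ε) has no repeated root in z. (Theorem 3.3: the double roots of an irreducible two-variable polynomial are isolated in the ε-plane.) -/
/-!
The resultant `D(ε)` of `P` and `∂P/∂z` with respect to `z` (the discriminant up to the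
leading coefficient) is a polynomial in `ε`, and `A P + B ∂P/∂z = D` for some `A, B`. Hence `D`
vanishes at every `ε` for which `P(·, ε)` has a repeated root. By Gauss's lemma `P`, being
primitive, stays irreducible over `ℂ(ε)`, hence is separable there, so `D ≠ 0` and its zeros
are isolated.
-/

open Polynomial Topology

namespace Polynomial

variable {R S : Type*} [CommRing R] [CommRing S]

theorem isPrimitive_of_isUnit_leadingCoeff {p : R[X]} (h : IsUnit p.leadingCoeff) :
    p.IsPrimitive :=
  isPrimitive_of_dvd (monic_C_mul_of_mul_leadingCoeff_eq_one h.val_inv_mul).isPrimitive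
    (dvd_mul_left p _)

theorem map_resultant_eq_zero_of_isRoot_map (f g : R[X]) (φ : R →+* S) {z : S}
    (hfg : f.natDegree ≠ 0 ∨ g.natDegree ≠ 0) (hf : (f.map φ).IsRoot z)
    (hg : (g.map φ).IsRoot z) : φ (f.resultant g) = 0 := by
  obtain ⟨p, q, -, -, hpq⟩ := exists_mul_add_mul_eq_C_resultant f g le_rfl le_rfl hfg
  have h := congrArg (fun r : R[X] => (r.map φ).eval z) hpq
  simp only [Polynomial.map_add, Polynomial.map_mul, Polynomial.map_C, eval_add, eval_mul,
    eval_C, hf.eq_zero, hg.eq_zero, zero_mul, add_zero] at h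
  exact h.symm

theorem resultant_ne_zero_of_isCoprime_map [IsDomain S] {φ : R →+* S}
    (hφ : Function.Injective φ) {f g : R[X]} (h : IsCoprime (f.map φ) (g.map φ)) :
    f.resultant g ≠ 0 := by
  have hres := resultant_ne_zero _ _ h
  rw [natDegree_map_eq_of_injective hφ, natDegree_map_eq_of_injective hφ,
    resultant_map_map] at hres
  exact fun h0 => hres (by rw [h0, map_zero])

theorem resultant_derivative_ne_zero [IsDomain R] [IsGCDMonoid R] [CharZero R] {p : R[X]}
    (hp : p.IsPrimitive) (hirr : Irreducible p) : p.resultant (derivative p) ≠ 0 := by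
  have hirr' := (hp.irreducible_iff_irreducible_map_fraction_map
    (K := FractionRing R)).mp hirr
  refine resultant_ne_zero_of_isCoprime_map (IsFractionRing.injective R (FractionRing R)) ?_
  rw [← derivative_map]
  exact hirr'.separable

theorem eventually_nhdsNE_eval_ne_zero [IsDomain R] [TopologicalSpace R] [T1Space R]
    {p : R[X]} (hp : p ≠ 0) (a : R) : ∀ᶠ x in 𝓝[≠] a, p.eval x ≠ 0 := by
  have hopen : IsOpen ({x | p.IsRoot x} \ {a})ᶜ :=
    ((finite_setOfPred_isRoot hp).sdiff).isClosed.isOpen_compl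
  filter_upwards [nhdsWithin_le_nhds (hopen.mem_nhds (by simp)), self_mem_nhdsWithin]
    with x hx hxa
  exact fun h0 => hx ⟨h0, hxa⟩

end Polynomial

theorem stmt8_general (P : Polynomial (Polynomial ℂ))
    (hirr : Irreducible P)
    (hdeg : 1 ≤ P.natDegree)
    (hlead : ∃ c : ℂ, c ≠ 0 ∧ P.leadingCoeff = Polynomial.C c)
    (ε₀ : ℂ) :
    ∃ δ > (0 : ℝ), ∀ ε : ℂ, 0 < ‖ε - ε₀‖ → ‖ε - ε₀‖ < δ →
      ¬∃ z : ℂ, (P.map (Polynomial.evalRingHom ε)).IsRoot z ∧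
        ((Polynomial.derivative P).map (Polynomial.evalRingHom ε)).IsRoot z := by
  obtain ⟨c, hc, hlc⟩ := hlead
  have hprim : P.IsPrimitive :=
    isPrimitive_of_isUnit_leadingCoeff (hlc ▸ isUnit_C.mpr hc.isUnit)
  have hD : P.resultant (derivative P) ≠ 0 := resultant_derivative_ne_zero hprim hirr
  obtain ⟨δ, hδ, hball⟩ :=
    Metric.mem_nhdsWithin_iff.mp (eventually_nhdsNE_eval_ne_zero hD ε₀)
  refine ⟨δ, hδ, fun ε hpos hlt ⟨z, hz, hz'⟩ => hball ⟨?_, ?_⟩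
    (map_resultant_eq_zero_of_isRoot_map P _ (evalRingHom ε) (.inl (by omega)) hz hz')⟩
  · rwa [Metric.mem_ball, dist_eq_norm]
  · exact sub_ne_zero.mp (norm_pos_iff.mp hpos)

/-- Theorem 3.3: the double roots of an irreducible two-variable polynomial
`P ∈ ℂ[z,ε]` (realized as `(ℂ[ε])[z]`, with leading `z`-coefficient a nonzero constant)
are isolated in the `ε`-plane. -/
theorem stmt8 (P : Polynomial (Polynomial ℂ))
    (hirr : Irreducible P)
    (hdeg : 1 ≤ P.natDegree)
    (hlead : ∃ c : ℂ, c ≠ 0 ∧ P.leadingCoeff = Polynomial.C c)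
    (ε₀ : ℂ)
    (hdouble : ∃ z₀ : ℂ, (P.map (Polynomial.evalRingHom ε₀)).IsRoot z₀ ∧
        ((Polynomial.derivative P).map (Polynomial.evalRingHom ε₀)).IsRoot z₀) :
    ∃ δ > (0 : ℝ), ∀ ε : ℂ, 0 < ‖ε - ε₀‖ → ‖ε - ε₀‖ < δ →
      ¬∃ z : ℂ, (P.map (Polynomial.evalRingHom ε)).IsRoot z ∧
        ((Polynomial.derivative P).map (Polynomial.evalRingHom ε)).IsRoot z :=
  stmt8_general P hirr hdeg hlead ε₀
end

section
/- Let L and R be finite index sets with distinguished elements out, in ∈ L (out ≠ in) and e01, e10 ∈ R (e01 ≠ e10), and let A : L×L → ℂ and B : R×R → ℂ be fixed. For real ε ∈ [0,1] define the complex matrix U(ε), indexed by the disjoint union L ⊔ R, column by column: the column indexed by in has entry 1−2ε in row out, entry 2√(ε−ε²) in row e01, and 0 in every other row; the column indexed by e10 has entry −1+2ε in row e01, entry 2√(ε−ε²) in row out, and 0 in every other row; every other column indexed by l ∈ L with l ≠ in has entry A(x,l) in each row x ∈ L and 0 in every row of R; every other column indexed by r ∈ R with r ≠ e10 has entry B(y,r)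 in each row y ∈ R and 0 in every row of L. Then there exist polynomials C₀(z) and f(z) with complex coefficients such that for all ε ∈ [0,1] and all z ∈ ℂ, det(U(ε) − z·I) = C₀(z) + ε·f(z). (Theorem 3.5: the characteristic polynomial of the time step operator of a star graph with a diffusive hub, r = −1 + 2/N and t = 2/N with ε = 1/N, is an affine polynomial in ε.) -/
/-- The collapsed time step operator of a star graph with a diffusive hub: the column of
`|in⟩` sends amplitude `1−2ε` to `|out⟩` and `2√(ε−ε²)` to `|0,1⟩` (= `e01`), the column of
`|1,0⟩` (= `e10`) sends `−1+2ε` to `|0,1⟩` and `2√(ε−ε²)` to `|out⟩`, and every other Left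
(resp. Right) state scatters within its own side by fixed amplitudes `A` (resp. `B`). -/
noncomputable def starU {L R : Type*} [DecidableEq L] [DecidableEq R]
    (out inp : L) (e01 e10 : R) (A : L → L → ℂ) (B : R → R → ℂ) (ε : ℝ) :
    Matrix (L ⊕ R) (L ⊕ R) ℂ :=
  Matrix.of fun x y =>
    match x, y with
    | Sum.inl x', Sum.inl ll =>
        if ll = inp then (if x' = out then ((1 - 2 * ε : ℝ) : ℂ) else 0) else A x' ll
    | Sum.inr y', Sum.inl ll =>
        if ll = inp then
          (if y' = e01 then ((2 * Real.sqrt (ε - ε ^ 2) : ℝ) : ℂ) else 0)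
        else 0
    | Sum.inl x', Sum.inr rr =>
        if rr = e10 then
          (if x' = out then ((2 * Real.sqrt (ε - ε ^ 2) : ℝ) : ℂ) else 0)
        else 0
    | Sum.inr y', Sum.inr rr =>
        if rr = e10 then (if y' = e01 then ((-1 + 2 * ε : ℝ) : ℂ) else 0) else B y' rr

/-! Only the columns of `|in⟩` and `|1,0⟩` depend on `ε`, so the characteristic polynomial is an
alternating bilinear function `D` of these two columns, the others being those of the
characteristic matrix of `U(0)`. In the expansion, the two terms linear in `√(ε−ε²)` are
`D(|0,1⟩, |1,0⟩)` and `D(|in⟩, |out⟩)`; both vanish, since the matrix is then block triangular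
with a zero column in a diagonal block. The remaining terms involve `√(ε−ε²)` only through its
square, which multiplies `D(|0,1⟩, |out⟩) = -D(|out⟩, |0,1⟩)`, and
`(1−2ε)(−1+2ε) − 4(ε−ε²) = −1` leaves an expression affine in `ε`. -/

open Matrix Polynomial

namespace Matrix

variable {ι K : Type*} [Fintype ι] [DecidableEq ι] [CommRing K]

noncomputable def detUpdateColBilin (M : Matrix ι ι K) {i j : ι} (hij : i ≠ j) :
    (ι → K) →ₗ[K] (ι → K) →ₗ[K] K :=
  LinearMap.mk₂ K (fun u v => ((M.updateCol i u).updateCol j v).det)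
    (fun u u' v => by simp only [updateCol_comm _ hij, det_updateCol_add])
    (fun c u v => by simp only [updateCol_comm _ hij, det_updateCol_smul, smul_eq_mul])
    (fun u v v' => det_updateCol_add _ _ _ _)
    (fun c u v => det_updateCol_smul _ _ _ _)

theorem detUpdateColBilin_apply (M : Matrix ι ι K) {i j : ι} (hij : i ≠ j) (u v : ι → K) :
    M.detUpdateColBilin hij u v = ((M.updateCol i u).updateCol j v).det :=
  rfl

theorem detUpdateColBilin_isAlt (M : Matrix ι ι K) {i j : ι} (hij : i ≠ j) :
    (M.detUpdateColBilin hij).IsAlt := fun u =>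
  det_zero_of_column_eq hij fun k => by simp [hij]

theorem det_sub_smul_one (M : Matrix ι ι K) (z : K) :
    (M - z • 1).det = (-1) ^ Fintype.card ι * M.charpoly.eval z := by
  rw [eval_charpoly, ← det_neg, neg_sub, smul_one_eq_diagonal, scalar_apply]

end Matrix

section BlockColumns

variable {L R K : Type*} [Fintype L] [DecidableEq L] [Fintype R] [DecidableEq R] [CommRing K]

theorem det_updateCol_inl_inr_eq_zero_of_inr_supported (M : Matrix (L ⊕ R) (L ⊕ R) K)
    (l : L) (r : R)
    (hM : ∀ x s, s ≠ r → M (Sum.inl x) (Sum.inr s) = 0) (u v : L ⊕ R → K)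
    (hu : ∀ x, u (Sum.inl x) = 0) (hv : ∀ x, v (Sum.inl x) = 0) :
    ((M.updateCol (Sum.inl l) u).updateCol (Sum.inr r) v).det = 0 := by
  set N := (M.updateCol (Sum.inl l) u).updateCol (Sum.inr r) v
  have h₁₂ : N.toBlocks₁₂ = 0 := by
    ext x s
    by_cases hs : s = r <;> simp [N, toBlocks₁₂, updateCol_apply, hs, hv, hM]
  rw [← fromBlocks_toBlocks N, h₁₂, det_fromBlocks_zero₁₂,
    det_eq_zero_of_column_eq_zero l fun x => by simp [N, toBlocks₁₁, updateCol_apply, hu],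
    zero_mul]

theorem det_updateCol_inl_inr_eq_zero_of_inl_supported (M : Matrix (L ⊕ R) (L ⊕ R) K)
    (l : L) (r : R)
    (hM : ∀ y m, m ≠ l → M (Sum.inr y) (Sum.inl m) = 0) (u v : L ⊕ R → K)
    (hu : ∀ y, u (Sum.inr y) = 0) (hv : ∀ y, v (Sum.inr y) = 0) :
    ((M.updateCol (Sum.inl l) u).updateCol (Sum.inr r) v).det = 0 := by
  set N := (M.updateCol (Sum.inl l) u).updateCol (Sum.inr r) v
  have h₂₁ : N.toBlocks₂₁ = 0 := by
    ext y m
    by_cases hm : m = l <;> simp [N, toBlocks₂₁, updateCol_apply, hm, hu, hM]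
  rw [← fromBlocks_toBlocks N, h₂₁, det_fromBlocks_zero₂₁,
    det_eq_zero_of_column_eq_zero r fun y => by simp [N, toBlocks₂₂, updateCol_apply, hv],
    mul_zero]

end BlockColumns

section StarGraph

variable {L R : Type*} [Fintype L] [DecidableEq L] [Fintype R] [DecidableEq R]
  (out inp : L) (e01 e10 : R) (A : L → L → ℂ) (B : R → R → ℂ)

theorem charmatrix_starU (ε : ℝ) :
    charmatrix (starU out inp e01 e10 A B ε) =
      ((charmatrix (starU out inp e01 e10 A B 0)).updateCol (Sum.inl inp)
          (X • Pi.single (Sum.inl inp) 1 - C ((1 - 2 * ε : ℝ) : ℂ) • Pi.single (Sum.inl out) 1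
            - C ((2 * √(ε - ε ^ 2) : ℝ) : ℂ) • Pi.single (Sum.inr e01) 1)).updateCol
        (Sum.inr e10)
        (X • Pi.single (Sum.inr e10) 1
          - C ((2 * √(ε - ε ^ 2) : ℝ) : ℂ) • Pi.single (Sum.inl out) 1
          - C ((-1 + 2 * ε : ℝ) : ℂ) • Pi.single (Sum.inr e01) 1) := by
  ext (x | y) (l | r) <;>
    simp only [charmatrix_apply, starU, updateCol_apply, Pi.sub_apply, Pi.smul_apply,
      Pi.single_apply, diagonal_apply, of_apply, Sum.inl.injEq, Sum.inr.injEq, reduceCtorEq,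
      smul_eq_mul] <;>
    split_ifs <;> simp_all

theorem charpoly_starU_eq_add_mul :
    ∃ p q : ℂ[X], ∀ ε ∈ Set.Icc (0 : ℝ) 1,
      (starU out inp e01 e10 A B ε).charpoly = p + C (ε : ℂ) * q := by
  let D := (charmatrix (starU out inp e01 e10 A B 0)).detUpdateColBilin
    (i := Sum.inl inp) (j := Sum.inr e10) Sum.inl_ne_inr
  let δ : L ⊕ R → L ⊕ R → ℂ[X] := fun k => Pi.single k 1
  set o := Sum.inl out
  set i := Sum.inl inp
  set e := Sum.inr e01
  set t := Sum.inr e10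
  refine ⟨-D (δ o) (δ e) - X * D (δ o) (δ t) + X * D (δ i) (δ e) + X ^ 2 * D (δ i) (δ t),
    2 * X * (D (δ o) (δ t) - D (δ i) (δ e)), fun ε hε => ?_⟩
  have hAlt := (charmatrix (starU out inp e01 e10 A B 0)).detUpdateColBilin_isAlt
    (i := Sum.inl inp) (j := Sum.inr e10) Sum.inl_ne_inr
  have het : D (δ e) (δ t) = 0 :=
    det_updateCol_inl_inr_eq_zero_of_inr_supported _ inp e10
      (fun _ _ _ => by simp [starU]) _ _ (by simp [δ, e]) (by simp [δ, t])
  have hio : D (δ i) (δ o) = 0 :=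
    det_updateCol_inl_inr_eq_zero_of_inl_supported _ inp e10
      (fun _ _ _ => by simp [starU]) _ _ (by simp [δ, i]) (by simp [δ, o])
  have hs : C ((√(ε - ε ^ 2) : ℝ) : ℂ) ^ 2 = C (ε : ℂ) - C (ε : ℂ) ^ 2 := by
    rw [← map_pow, ← Complex.ofReal_pow, Real.sq_sqrt (by nlinarith [hε.1, hε.2])]
    simp only [Complex.ofReal_sub, Complex.ofReal_pow, map_sub, map_pow]
  rw [charpoly, charmatrix_starU, ← detUpdateColBilin_apply _ (Sum.inl_ne_inr)]
  simp only [map_sub, map_smul, LinearMap.sub_apply, LinearMap.smul_apply, smul_eq_mul]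
  rw [hAlt.self_eq_zero, hAlt.self_eq_zero, het, hio, ← hAlt.neg (δ o) (δ e)]
  simp only [Complex.ofReal_sub, Complex.ofReal_add, Complex.ofReal_mul, Complex.ofReal_one,
    Complex.ofReal_neg, Complex.ofReal_ofNat, map_sub, map_add, map_mul, map_one, map_neg,
    C_ofNat]
  linear_combination (-D (δ o) (δ e)) * 4 * hs

end StarGraph

theorem stmt10_general {L R : Type*} [Fintype L] [DecidableEq L] [Fintype R] [DecidableEq R]
    (out inp : L) (e01 e10 : R)
    (A : L → L → ℂ) (B : R → R → ℂ) :
    ∃ C₀ f : Polynomial ℂ, ∀ ε ∈ Set.Icc (0 : ℝ) 1, ∀ z : ℂ,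
      (starU out inp e01 e10 A B ε - z • (1 : Matrix (L ⊕ R) (L ⊕ R) ℂ)).det
        = C₀.eval z + (ε : ℂ) * f.eval z := by
  obtain ⟨p, q, hpq⟩ := charpoly_starU_eq_add_mul out inp e01 e10 A B
  refine ⟨C ((-1) ^ Fintype.card (L ⊕ R)) * p, C ((-1) ^ Fintype.card (L ⊕ R)) * q,
    fun ε hε z => ?_⟩
  rw [det_sub_smul_one, hpq ε hε]
  simp only [eval_add, eval_mul, eval_C]
  ring

/-- Theorem 3.5: the characteristic polynomial of the collapsed time step operator of a
star graph with a diffusive hub is an affine polynomial in `ε = 1/N`: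
`det(U(ε) − z·I) = C₀(z) + ε·f(z)`. -/
theorem stmt10 {L R : Type*} [Fintype L] [DecidableEq L] [Fintype R] [DecidableEq R]
    (out inp : L) (hL : out ≠ inp) (e01 e10 : R) (hR : e01 ≠ e10)
    (A : L → L → ℂ) (B : R → R → ℂ) :
    ∃ C₀ f : Polynomial ℂ, ∀ ε ∈ Set.Icc (0 : ℝ) 1, ∀ z : ℂ,
      (starU out inp e01 e10 A B ε - z • (1 : Matrix (L ⊕ R) (L ⊕ R) ℂ)).det
        = C₀.eval z + (ε : ℂ) * f.eval z :=
  stmt10_general out inp e01 e10 A B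
end

section
/- Let d ≥ 1 be an integer and let a_0, …, a_{d−1} : ℂ×ℂ → ℂ be polynomial functions; for (ε,ξ) ∈ ℂ×ℂ set P(z,ε,ξ) = z^d + Σ_{j<d} a_j(ε,ξ)·z^j. Say P(·,ε,ξ) has a double root if there exists z ∈ ℂ with P(z,ε,ξ) = 0 and (∂P/∂z)(z,ε,ξ) = 0. Assume P(·,0,0) has a double root, and that there exists σ₀ > 0 such that P(·,ε,0) has no double root for all ε with 0 < |ε| < σ₀. Then for every ρ > 0 there exists σ > 0 such that for every ξ ∈ ℂ with |ξ| < σ there exists ε₀ ∈ ℂ with |ε₀| < ρ for which P(·,ε₀,ξ) has a double root. (Theorem 5.2: altering the graph by a parameter ξ causes the location ε₀(ξ) of the double zero of the characteristic polynomial to drift continuously, with ε₀(ξ) → 0 as ξ → 0.) -/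
/-!
A monic polynomial has a double root exactly when its discriminant, the resultant of the
polynomial and its derivative, vanishes. For the family `P(·,ε,ξ)` this discriminant is a
polynomial `D(ε,ξ)`, so it is continuous and holomorphic in `ε`. By hypothesis `ε = 0` is an
isolated zero of `D(·,0)`, so `|D(·,0)|` is bounded below by some `m > 0` on a small circle
`|ε| = r`. For `ξ` close to `0`, `|D(·,ξ)| > m/2` on that circle while `|D(0,ξ)| < m/2`; by the
minimum modulus principle `D(·,ξ)` must then vanish inside the circle.
-/

open Polynomial Metric Filter Topology

namespace Polynomial

theorem degree_sum_range_C_mul_X_pow_lt {R : Type*} [Semiring R] (d : ℕ) (c : ℕ → R) :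
    (∑ j ∈ Finset.range d, C (c j) * X ^ j).degree < (d : WithBot ℕ) := by
  rw [Finset.sum_range fun j => C (c j) * X ^ j]
  exact degree_sum_fin_lt _

theorem natDegree_X_pow_add_of_degree_lt {R : Type*} [Semiring R] [Nontrivial R] {p : R[X]}
    {n : ℕ} (h : p.degree < n) : (X ^ n + p).natDegree = n := by
  rw [natDegree_add_eq_left_of_degree_lt (by rwa [degree_X_pow]), natDegree_X_pow]

theorem resultant_eq_zero_iff_exists_isRoot {K : Type*} [Field K] [IsAlgClosed K]
    {f g : K[X]} (hf : f ≠ 0) : resultant f g = 0 ↔ ∃ z, f.IsRoot z ∧ g.IsRoot z := by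
  rw [resultant_eq_zero_iff, isCoprime_iff_aeval_ne_zero_of_isAlgClosed (k := K) K]
  simp [hf]

end Polynomial

theorem MvPolynomial.differentiable_eval {𝕜 σ : Type*} [NontriviallyNormedField 𝕜]
    [CompleteSpace 𝕜] [Fintype σ]
    (p : MvPolynomial σ 𝕜) : Differentiable 𝕜 fun x => eval x p :=
  fun x => (AnalyticOnNhd.eval_mvPolynomial p x trivial).differentiableAt

theorem Complex.le_norm_center_of_forall_mem_sphere {f : ℂ → ℂ} {c : ℂ} {r m : ℝ} (hr : 0 < r)
    (hf : DifferentiableOn ℂ f (closedBall c r)) (hne : ∀ z ∈ closedBall c r, f z ≠ 0)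
    (hm : ∀ z ∈ sphere c r, m ≤ ‖f z‖) : m ≤ ‖f c‖ := by
  rcases le_or_gt m 0 with hm0 | hm0
  · exact hm0.trans (norm_nonneg _)
  have hinv : DiffContOnCl ℂ f⁻¹ (ball c r) := by
    refine DifferentiableOn.diffContOnCl ?_
    rw [closure_ball c hr.ne']
    exact hf.inv hne
  have hbound : ∀ z ∈ frontier (ball c r), ‖f⁻¹ z‖ ≤ m⁻¹ := by
    intro z hz
    rw [frontier_ball c hr.ne'] at hz
    rw [Pi.inv_apply, norm_inv]
    exact inv_anti₀ hm0 (hm z hz)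
  have hc := Complex.norm_le_of_forall_mem_frontier_norm_le isBounded_ball hinv hbound
    (subset_closure (mem_ball_self hr))
  rw [Pi.inv_apply, norm_inv] at hc
  exact (inv_le_inv₀ (norm_pos_iff.2 (hne c (mem_closedBall_self hr.le))) hm0).1 hc

theorem eventually_exists_zero_of_isolated_zero {X : Type*} [TopologicalSpace X]
    {F : X → ℂ → ℂ} {x₀ : X} {c : ℂ} (hF : Continuous (Function.uncurry F))
    (hdiff : ∀ x, Differentiable ℂ (F x)) (hc : F x₀ c = 0)
    (hiso : ∀ᶠ z in 𝓝[≠] c, F x₀ z ≠ 0) {ρ : ℝ} (hρ : 0 < ρ) :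
    ∀ᶠ x in 𝓝 x₀, ∃ z ∈ ball c ρ, F x z = 0 := by
  obtain ⟨r, hr, hrρ, hsphere⟩ : ∃ r, 0 < r ∧ r < ρ ∧ ∀ z ∈ sphere c r, F x₀ z ≠ 0 := by
    obtain ⟨δ, hδ, hball⟩ := eventually_nhds_iff_ball.1 (eventually_nhdsWithin_iff.1 hiso)
    refine ⟨min ρ δ / 2, by positivity, by linarith [min_le_left ρ δ], fun z hz => ?_⟩
    have hzc : dist z c = min ρ δ / 2 := hz
    refine hball z ?_ fun h => ?_
    · rw [mem_ball, hzc]; linarith [min_le_right ρ δ, lt_min hρ hδ]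
    · rw [Set.mem_singleton_iff.1 h, dist_self] at hzc; linarith [lt_min hρ hδ]
  obtain ⟨m, hm, hmin⟩ : ∃ m > 0, ∀ z ∈ sphere c r, m ≤ ‖F x₀ z‖ := by
    obtain ⟨z₀, hz₀, hmin⟩ := (isCompact_sphere c r).exists_isMinOn
      (NormedSpace.sphere_nonempty.2 hr.le) (hdiff x₀).continuous.norm.continuousOn
    exact ⟨‖F x₀ z₀‖, norm_pos_iff.2 (hsphere z₀ hz₀), hmin⟩
  have hunif : ∀ᶠ x in 𝓝 x₀, ∀ z ∈ sphere c r, dist (F x z) (F x₀ z) < m / 2 := by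
    obtain ⟨v, hv, hvu⟩ := (isCompact_sphere c r).mem_uniformity_of_prod hF.continuousOn
      (Set.mem_univ x₀) (dist_mem_uniformity (half_pos hm))
    rw [nhdsWithin_univ] at hv
    filter_upwards [hv] with x hx z hz using hvu x hx z hz
  have hcenter : ∀ᶠ x in 𝓝 x₀, ‖F x c‖ < m / 2 := by
    have hcont : Continuous fun x => F x c := hF.comp (continuous_id.prodMk continuous_const)
    simpa [hc] using hcont.continuousAt.eventually (ball_mem_nhds (F x₀ c) (half_pos hm))
  filter_upwards [hunif, hcenter] with x hx hxc
  by_contra! hno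
  have hlow : m / 2 ≤ ‖F x c‖ := by
    refine Complex.le_norm_center_of_forall_mem_sphere hr (hdiff x).differentiableOn
      (fun z hz => hno z (closedBall_subset_ball hrρ hz)) fun z hz => ?_
    have := norm_sub_norm_le (F x₀ z) (F x z)
    rw [← dist_eq_norm, dist_comm] at this
    linarith [hmin z hz, hx z hz]
  linarith

theorem stmt11_general (d : ℕ) (a : ℕ → MvPolynomial (Fin 2) ℂ)
    (P : ℂ → ℂ → Polynomial ℂ)
    (hPdef : ∀ ε ξ : ℂ, P ε ξ = Polynomial.X ^ d +
      ∑ j ∈ Finset.range d,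
        Polynomial.C (MvPolynomial.eval ![ε, ξ] (a j)) * Polynomial.X ^ j)
    (hdouble0 : ∃ z : ℂ, (P 0 0).IsRoot z ∧ (Polynomial.derivative (P 0 0)).IsRoot z)
    (σ₀ : ℝ) (hσ₀ : 0 < σ₀)
    (hnodouble : ∀ ε : ℂ, 0 < ‖ε‖ → ‖ε‖ < σ₀ →
      ¬∃ z : ℂ, (P ε 0).IsRoot z ∧ (Polynomial.derivative (P ε 0)).IsRoot z) :
    ∀ ρ > (0 : ℝ), ∃ σ > (0 : ℝ), ∀ ξ : ℂ, ‖ξ‖ < σ →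
      ∃ ε₀ : ℂ, ‖ε₀‖ < ρ ∧
        ∃ z : ℂ, (P ε₀ ξ).IsRoot z ∧ (Polynomial.derivative (P ε₀ ξ)).IsRoot z := by
  set p : (MvPolynomial (Fin 2) ℂ)[X] := X ^ d + ∑ j ∈ Finset.range d, C (a j) * X ^ j
  have hP : ∀ ε ξ, p.map (MvPolynomial.eval ![ε, ξ]) = P ε ξ := by
    intro ε ξ
    simp [p, hPdef, Polynomial.map_sum]
  -- Fixed sizes `d, d - 1` make the resultant commute with specializing `(ε, ξ)`.
  set D := resultant p (derivative p) d (d - 1)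
  have hD : ∀ ε ξ, MvPolynomial.eval ![ε, ξ] D = 0 ↔
      ∃ z, (P ε ξ).IsRoot z ∧ (derivative (P ε ξ)).IsRoot z := by
    intro ε ξ
    have hlow := degree_sum_range_C_mul_X_pow_lt d fun j => MvPolynomial.eval ![ε, ξ] (a j)
    have hdeg : (P ε ξ).natDegree = d := hPdef ε ξ ▸ natDegree_X_pow_add_of_degree_lt hlow
    rw [← resultant_map_map, ← derivative_map, hP, ← hdeg, ← natDegree_derivative]
    exact resultant_eq_zero_iff_exists_isRoot (hPdef ε ξ ▸ monic_X_pow_add hlow).ne_zero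
  have hiso : ∀ᶠ ε in 𝓝[≠] 0, MvPolynomial.eval ![ε, 0] D ≠ 0 := by
    refine eventually_nhdsWithin_iff.2 (eventually_nhds_iff_ball.2 ⟨σ₀, hσ₀, fun ε hε hε0 => ?_⟩)
    rw [Ne, hD]
    exact hnodouble ε (norm_pos_iff.2 hε0) (mem_ball_zero_iff.1 hε)
  intro ρ hρ
  have hzero := eventually_exists_zero_of_isolated_zero
    (F := fun ξ ε => MvPolynomial.eval ![ε, ξ] D)
    ((MvPolynomial.continuous_eval D).comp (by fun_prop))
    (fun ξ => (MvPolynomial.differentiable_eval D).comp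
      (differentiable_pi.2 (Fin.forall_fin_two.2 ⟨differentiable_id, differentiable_const ξ⟩)))
    ((hD 0 0).2 hdouble0) hiso hρ
  obtain ⟨σ, hσ, hσzero⟩ := eventually_nhds_iff_ball.1 hzero
  refine ⟨σ, hσ, fun ξ hξ => ?_⟩
  obtain ⟨ε, hε, hεzero⟩ := hσzero ξ (mem_ball_zero_iff.2 hξ)
  exact ⟨ε, mem_ball_zero_iff.1 hε, (hD ε ξ).1 hεzero⟩

/-- Theorem 5.2: if the monic polynomial family `P(z,ε,ξ)` (with coefficients polynomial in
`(ε,ξ)`) has a double root at `(ε,ξ) = (0,0)` which is isolated in `ε` at `ξ = 0`, then for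
each `ρ > 0` there is `σ > 0` so that for every `|ξ| < σ` some `|ε₀| < ρ` yields a double
root of `P(·,ε₀,ξ)`: the double zero drifts continuously with `ξ`. -/
theorem stmt11 (d : ℕ) (hd : 1 ≤ d) (a : ℕ → MvPolynomial (Fin 2) ℂ)
    (P : ℂ → ℂ → Polynomial ℂ)
    (hPdef : ∀ ε ξ : ℂ, P ε ξ = Polynomial.X ^ d +
      ∑ j ∈ Finset.range d,
        Polynomial.C (MvPolynomial.eval ![ε, ξ] (a j)) * Polynomial.X ^ j)
    (hdouble0 : ∃ z : ℂ, (P 0 0).IsRoot z ∧ (Polynomial.derivative (P 0 0)).IsRoot z)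
    (σ₀ : ℝ) (hσ₀ : 0 < σ₀)
    (hnodouble : ∀ ε : ℂ, 0 < ‖ε‖ → ‖ε‖ < σ₀ →
      ¬∃ z : ℂ, (P ε 0).IsRoot z ∧ (Polynomial.derivative (P ε 0)).IsRoot z) :
    ∀ ρ > (0 : ℝ), ∃ σ > (0 : ℝ), ∀ ξ : ℂ, ‖ξ‖ < σ →
      ∃ ε₀ : ℂ, ‖ε₀‖ < ρ ∧
        ∃ z : ℂ, (P ε₀ ξ).IsRoot z ∧ (Polynomial.derivative (P ε₀ ξ)).IsRoot z :=
  stmt11_general d a P hPdef hdouble0 σ₀ hσ₀ hnodouble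
end

section
/- For every real number t with 0 ≤ t ≤ 1/2, one has 1/2 < sin²((π/2)·√(1+t)) / (1+t) ≤ 1/(1+t). (The key inequality in the proof of Theorem 5.5: when the tuning parameter t = δ²N/(4c²) is at most 1/2, the success probability P(⌊π/(2c√ε)⌋) = (1/(1+t))·sin²((π/2)√(1+t)) + O(√ε) of the quantum search exceeds one half.) -/
/-!
Writing `s = √(1 + t) ∈ [1, 5/4]`, we have `sin (π/2 · s) = cos (π/2 · (s - 1))`, and the
argument of the cosine is at most `π/8 < 2/5`. The Taylor bound `cos x ≥ 1 - x²/2` gives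
`sin² (π/2 · s) ≥ (23/25)² > 3/4 ≥ (1 + t)/2`.
-/

open Real

lemma cos_pi_div_two_mul_ge {u : ℝ} (hu : |u| ≤ 1 / 4) : 23 / 25 ≤ cos (π / 2 * u) := by
  have hx : (π / 2 * u) ^ 2 ≤ (2 / 5) ^ 2 := by
    rw [sq_le_sq, abs_mul, abs_of_pos (by positivity : 0 < π / 2), abs_of_pos (by norm_num : (0 : ℝ) < 2 / 5)]
    calc π / 2 * |u| ≤ π / 2 * (1 / 4) := by gcongr
      _ ≤ 2 / 5 := by linarith [pi_lt_d2]
  linarith [one_sub_sq_div_two_le_cos (x := π / 2 * u)]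

lemma three_quarters_lt_sin_sq_pi_div_two_mul {s : ℝ} (hs : |s - 1| ≤ 1 / 4) :
    3 / 4 < sin (π / 2 * s) ^ 2 := by
  have hsin : sin (π / 2 * s) = cos (π / 2 * (s - 1)) := by
    rw [← sin_add_pi_div_two]
    ring_nf
  have hcos := cos_pi_div_two_mul_ge hs
  rw [hsin]
  nlinarith

/-- The key inequality in the proof of Theorem 5.5: when the tuning parameter
`t` is at most `1/2`, `1/2 < sin²((π/2)√(1+t))/(1+t) ≤ 1/(1+t)`. -/
theorem stmt12 (t : ℝ) (h0 : 0 ≤ t) (h1 : t ≤ 1 / 2) :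
    1 / 2 < Real.sin (Real.pi / 2 * Real.sqrt (1 + t)) ^ 2 / (1 + t) ∧
      Real.sin (Real.pi / 2 * Real.sqrt (1 + t)) ^ 2 / (1 + t) ≤ 1 / (1 + t) := by
  have hpos : 0 < 1 + t := by linarith
  have hs : |√(1 + t) - 1| ≤ 1 / 4 := by
    have hlow : 1 ≤ √(1 + t) := one_le_sqrt.mpr (by linarith)
    have hhigh : √(1 + t) ≤ 5 / 4 := sqrt_le_iff.mpr ⟨by norm_num, by linarith⟩
    rw [abs_le]
    constructor <;> linarith
  constructor
  · rw [lt_div_iff₀ hpos]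
    linarith [three_quarters_lt_sin_sq_pi_div_two_mul hs]
  · gcongr
    exact sin_sq_le_one _
end

section
/- Let λ₀ ∈ ℂ with λ₀ ≠ 0, let φ ∈ ℝ, and let ε ∈ ℝ with 0 < ε < 1. Suppose complex numbers α, β, γ, δ satisfy the system: β·e^{iφ} = α·λ₀; α·(1−2ε) + 2γ·√(ε−ε²) = β·λ₀; 2α·√(ε−ε²) + γ·(−1+2ε) = δ·λ₀; and γ = −δ·λ₀. Then α·(λ₀² + e^{iφ}) = 0. (The algebraic core of Theorem 4.8: unless the phase φ is chosen so that λ₀² + e^{iφ} = 0, any λ₀-eigenvector of the perturbed walk operator U with nonzero amplitude on the hub states must vanish there, so a hub-adjacent eigenvector of U₀ cannot persist as a constant-eigenvalue eigenvector of U.) -/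
/-!
The last two equations combine to `2 (α s + ε γ) = 0` with `s = √(ε - ε²)`, so the amplitude `γ`
is fixed by `α`. Substituting this into the hub equation and using `s² = ε - ε²`, the hub sends
the incoming amplitude back with factor `-1`: `β λ₀ = -α`. Multiplying the outer reflection
`β e^{iφ} = α λ₀` by `λ₀` then gives `α (λ₀² + e^{iφ}) = 0`.
-/

section HubEquations

variable {K : Type*} [Field K] {ε s l e α β γ δ : K}

theorem mul_eq_neg_of_hub_equations (hε : ε ≠ 0) (hs : s ^ 2 = ε - ε ^ 2)
    (h2 : α * (1 - 2 * ε) + 2 * γ * s = β * l)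
    (h3 : 2 * α * s + γ * (-1 + 2 * ε) = δ * l) (h4 : γ = -δ * l) :
    β * l = -α := by
  have hγ : 2 * (α * s + ε * γ) = 0 := by linear_combination h3 + h4
  have hε_mul : ε * (β * l + α) = 0 := by
    linear_combination -ε * h2 + s * hγ - 2 * α * hs
  linear_combination (mul_eq_zero.mp hε_mul).resolve_left hε

theorem mul_sq_add_eq_zero_of_hub_equations (hε : ε ≠ 0) (hs : s ^ 2 = ε - ε ^ 2)
    (h1 : β * e = α * l) (h2 : α * (1 - 2 * ε) + 2 * γ * s = β * l)
    (h3 : 2 * α * s + γ * (-1 + 2 * ε) = δ * l) (h4 : γ = -δ * l) :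
    α * (l ^ 2 + e) = 0 := by
  linear_combination -l * h1 + e * mul_eq_neg_of_hub_equations hε hs h2 h3 h4

end HubEquations

theorem Complex.sq_ofReal_sqrt_sub_sq {ε : ℝ} (h0 : 0 ≤ ε) (h1 : ε ≤ 1) :
    ((√(ε - ε ^ 2) : ℝ) : ℂ) ^ 2 = ε - ε ^ 2 := by
  have hnonneg : 0 ≤ ε - ε ^ 2 := by nlinarith
  exact_mod_cast Real.sq_sqrt hnonneg

theorem stmt13_general (l₀ : ℂ) (φ : ℝ) (ε : ℝ) (hε : 0 < ε) (hε1 : ε < 1)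
    (α β γ δ : ℂ)
    (h1 : β * Complex.exp (φ * Complex.I) = α * l₀)
    (h2 : α * (1 - 2 * (ε : ℂ)) + 2 * γ * ((Real.sqrt (ε - ε ^ 2) : ℝ) : ℂ) = β * l₀)
    (h3 : 2 * α * ((Real.sqrt (ε - ε ^ 2) : ℝ) : ℂ) + γ * (-1 + 2 * (ε : ℂ)) = δ * l₀)
    (h4 : γ = -δ * l₀) :
    α * (l₀ ^ 2 + Complex.exp (φ * Complex.I)) = 0 :=
  mul_sq_add_eq_zero_of_hub_equations (Complex.ofReal_ne_zero.mpr hε.ne')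
    (Complex.sq_ofReal_sqrt_sub_sq hε.le hε1.le) h1 h2 h3 h4

/-- The algebraic core of Theorem 4.8: the eigenvalue equations at the hub vertex force
`α·(λ₀² + e^{iφ}) = 0`. -/
theorem stmt13 (l₀ : ℂ) (hl₀ : l₀ ≠ 0) (φ : ℝ) (ε : ℝ) (hε : 0 < ε) (hε1 : ε < 1)
    (α β γ δ : ℂ)
    (h1 : β * Complex.exp (φ * Complex.I) = α * l₀)
    (h2 : α * (1 - 2 * (ε : ℂ)) + 2 * γ * ((Real.sqrt (ε - ε ^ 2) : ℝ) : ℂ) = β * l₀)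
    (h3 : 2 * α * ((Real.sqrt (ε - ε ^ 2) : ℝ) : ℂ) + γ * (-1 + 2 * (ε : ℂ)) = δ * l₀)
    (h4 : γ = -δ * l₀) :
    α * (l₀ ^ 2 + Complex.exp (φ * Complex.I)) = 0 :=
  stmt13_general l₀ φ ε hε hε1 α β γ δ h1 h2 h3 h4
end

section
/- For real ε ∈ (0,1) let U(ε) be the 4×4 complex matrix, in the ordered basis (|out⟩, |in⟩, |0,1⟩, |1,0⟩), with rows (0, 1−2ε, 0, 2√(ε−ε²)), (1, 0, 0, 0), (0, 2√(ε−ε²), 0, 2ε−1), (0, 0, −1, 0), and let ψ = (1/√2)·(1, 1, 0, 0) ∈ ℂ⁴. Then there exist K > 0 and ε₀ ∈ (0,1) such that for all ε ∈ (0,ε₀), setting m = ⌊π/(2√ε)⌋ and Φ = U(ε)^m·ψ, one has |Φ₃|² + |Φ₄|² ≥ 1 − K·√ε, where Φ₃, Φ₄ are the components of Φ in the |0,1⟩ and |1,0⟩ coordinates. (The Grover graph example of Section 2.1: starting from the uniform superposition and iterating the walk m = ⌊(π/2)√N⌋ times, ε = 1/N, the system ends up on the marked edge up to an error O(1/√N),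 so a measurement completes the search.) -/
/-!
Put `α = arcsin √ε`. On states of the form `c (cos a, cos b, sin a, -sin b)` the walk acts
by `(a, b) ↦ (b + 2α, a)`, so `U^m ψ` is such a state with `a, b = mα ± δ`, `0 ≤ δ ≤ α`, and
its weight on the marked edge is `(sin² a + sin² b) / 2`. From `sin α ≤ α ≤ tan α` we get
`√ε ≤ α ≤ √ε / (1 - ε)`, so for `m = ⌊π/(2√ε)⌋` the angle `mα` lies within `√ε` of `π/2`,
both angles within `3√ε`, and the weight is at least `1 - 9ε`.
-/

open Real Matrix

theorem Real.one_sub_sq_le_sin_sq_of_abs_sub_pi_div_two_le {x r : ℝ} (h : |x - π / 2| ≤ r) :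
    1 - r ^ 2 ≤ sin x ^ 2 := by
  have hcos : 1 - (x - π / 2) ^ 2 / 2 ≤ sin x := by
    simpa [cos_sub_pi_div_two] using one_sub_sq_div_two_le_cos (x := x - π / 2)
  have hsq : (x - π / 2) ^ 2 ≤ r ^ 2 := sq_le_sq' (abs_le.1 h).1 (abs_le.1 h).2
  nlinarith [sin_le_one x, sq_nonneg ((x - π / 2) ^ 2)]

theorem Real.arcsin_le_div_one_sub_sq {x : ℝ} (h0 : 0 ≤ x) (h1 : x < 1) :
    arcsin x ≤ x / (1 - x ^ 2) := by
  have hpos : 0 < 1 - x ^ 2 := by nlinarith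
  calc arcsin x ≤ tan (arcsin x) := le_tan (arcsin_nonneg.2 h0) (arcsin_lt_pi_div_two.2 h1)
    _ = x / √(1 - x ^ 2) := tan_arcsin x
    _ ≤ x / (1 - x ^ 2) := by
      gcongr
      exact (le_sqrt hpos.le hpos.le).2 (by nlinarith)

theorem Real.arcsin_le_two_mul {x : ℝ} (h0 : 0 ≤ x) (h1 : x ^ 2 ≤ 1 / 2) :
    arcsin x ≤ 2 * x := by
  have hpos : 0 < 1 - x ^ 2 := by linarith
  calc arcsin x ≤ x / (1 - x ^ 2) := arcsin_le_div_one_sub_sq h0 (by nlinarith)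
    _ ≤ 2 * x := by rw [div_le_iff₀ hpos]; nlinarith

theorem Real.cos_two_mul_arcsin_sqrt {ε : ℝ} (h0 : 0 ≤ ε) (h1 : ε ≤ 1) :
    cos (2 * arcsin √ε) = 1 - 2 * ε := by
  rw [cos_two_mul, cos_arcsin, sq_sqrt (by simpa [sq_sqrt h0] using h1), sq_sqrt h0]
  ring

theorem Real.sin_two_mul_arcsin_sqrt {ε : ℝ} (h0 : 0 ≤ ε) (h1 : ε ≤ 1) :
    sin (2 * arcsin √ε) = 2 * √(ε - ε ^ 2) := by
  rw [sin_two_mul, cos_arcsin, sin_arcsin (by linarith [sqrt_nonneg ε]) (sqrt_le_one.2 h1),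
    sq_sqrt h0, mul_assoc, ← sqrt_mul h0]
  ring_nf

/-- `U(ε)` written with the angle `α = arcsin √ε`, so that `cos 2α = 1 - 2ε` and
`sin 2α = 2√(ε - ε²)`. -/
noncomputable def groverWalk (α : ℝ) : Matrix (Fin 4) (Fin 4) ℂ :=
  !![0, (cos (2 * α) : ℂ), 0, (sin (2 * α) : ℂ);
     1, 0, 0, 0;
     0, (sin (2 * α) : ℂ), 0, -(cos (2 * α) : ℂ);
     0, 0, -1, 0]

noncomputable def walkState (c : ℂ) (a b : ℝ) : Fin 4 → ℂ :=
  ![c * cos a, c * cos b, c * sin a, -(c * sin b)]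

theorem groverWalk_mulVec_walkState (α : ℝ) (c : ℂ) (a b : ℝ) :
    groverWalk α *ᵥ walkState c a b = walkState c (b + 2 * α) a := by
  ext i
  fin_cases i <;>
    simp [groverWalk, walkState, mulVec, dotProduct, Fin.sum_univ_four, Complex.cos_add,
      Complex.sin_add] <;>
    ring

theorem groverWalk_pow_mulVec_walkState_zero (α : ℝ) (hα : 0 ≤ α) (c : ℂ) (n : ℕ) :
    ∃ δ ∈ Set.Icc 0 α,
      groverWalk α ^ n *ᵥ walkState c 0 0 = walkState c (n * α + δ) (n * α - δ) := by
  induction n with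
  | zero => exact ⟨0, ⟨le_rfl, hα⟩, by simp⟩
  | succ n ih =>
    obtain ⟨δ, ⟨hδ0, hδα⟩, h⟩ := ih
    refine ⟨α - δ, ⟨by linarith, by linarith⟩, ?_⟩
    rw [pow_succ', ← mulVec_mulVec, h, groverWalk_mulVec_walkState]
    push_cast
    ring_nf

theorem norm_walkState_two_sq_add_norm_walkState_three_sq (c : ℂ) (a b : ℝ) :
    ‖walkState c a b 2‖ ^ 2 + ‖walkState c a b 3‖ ^ 2 =
      ‖c‖ ^ 2 * (sin a ^ 2 + sin b ^ 2) := by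
  simp only [walkState, Matrix.cons_val, norm_neg, norm_mul, Complex.norm_real, Real.norm_eq_abs,
    mul_pow, sq_abs]
  ring

theorem groverWalk_arcsin_sqrt {ε : ℝ} (h0 : 0 ≤ ε) (h1 : ε ≤ 1) :
    groverWalk (arcsin √ε) =
      !![0, ((1 - 2 * ε : ℝ) : ℂ), 0, ((2 * √(ε - ε ^ 2) : ℝ) : ℂ);
         1, 0, 0, 0;
         0, ((2 * √(ε - ε ^ 2) : ℝ) : ℂ), 0, ((2 * ε - 1 : ℝ) : ℂ);
         0, 0, -1, 0] := by
  rw [groverWalk, cos_two_mul_arcsin_sqrt h0 h1, sin_two_mul_arcsin_sqrt h0 h1]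
  push_cast
  ring_nf

theorem abs_floor_mul_arcsin_sqrt_sub_pi_div_two_le {ε : ℝ} (h0 : 0 < ε) (h1 : ε ≤ 1 / 16) :
    |⌊π / (2 * √ε)⌋₊ * arcsin √ε - π / 2| ≤ √ε := by
  set e := √ε
  set m := ⌊π / (2 * e)⌋₊
  have he : 0 < e := sqrt_pos.2 h0
  have hee : e ^ 2 = ε := sq_sqrt h0.le
  have he4 : e ≤ 1 / 4 := by nlinarith
  have hlo : e ≤ arcsin e := by
    have := sin_le (arcsin_nonneg.2 he.le)
    rwa [sin_arcsin (by linarith) (by linarith)] at this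
  have hhi : arcsin e ≤ e / (1 - ε) := hee ▸ arcsin_le_div_one_sub_sq he.le (by linarith)
  have hm_le : m * e ≤ π / 2 := by
    have := Nat.floor_le (div_nonneg pi_pos.le (by positivity : (0 : ℝ) ≤ 2 * e))
    rw [le_div_iff₀ (by positivity)] at this
    linarith
  have hm_gt : π / 2 < (m + 1) * e := by
    have := Nat.lt_floor_add_one (π / (2 * e))
    rw [div_lt_iff₀ (by positivity)] at this
    linarith
  rw [abs_le]
  constructor
  · nlinarith [Nat.cast_nonneg (α := ℝ) m]
  · have hε1 : 0 < 1 - ε := by linarith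
    calc m * arcsin e - π / 2 ≤ m * e / (1 - ε) - π / 2 := by
          rw [mul_div_assoc]; gcongr
      _ ≤ π / 2 / (1 - ε) - π / 2 := by gcongr
      _ ≤ e := by
          rw [sub_le_iff_le_add, div_le_iff₀ hε1, ← hee]
          nlinarith [pi_le_four, mul_pos he he]

/-- The Grover graph example of Section 2.1: starting from the uniform superposition
`ψ = (|out⟩+|in⟩)/√2` and iterating the walk `m = ⌊π/(2√ε)⌋` times, the state ends up on
the marked edge (coordinates `|0,1⟩`, `|1,0⟩`) up to an error `O(√ε)`. -/
theorem stmt14 (U : ℝ → Matrix (Fin 4) (Fin 4) ℂ)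
    (hU : ∀ ε ∈ Set.Ioo (0 : ℝ) 1, U ε =
      !![0, ((1 - 2 * ε : ℝ) : ℂ), 0, ((2 * Real.sqrt (ε - ε ^ 2) : ℝ) : ℂ);
         1, 0, 0, 0;
         0, ((2 * Real.sqrt (ε - ε ^ 2) : ℝ) : ℂ), 0, ((2 * ε - 1 : ℝ) : ℂ);
         0, 0, -1, 0])
    (ψ : Fin 4 → ℂ)
    (hψ : ψ = ![(((Real.sqrt 2)⁻¹ : ℝ) : ℂ), (((Real.sqrt 2)⁻¹ : ℝ) : ℂ), 0, 0]) :
    ∃ K > (0 : ℝ), ∃ ε₀ ∈ Set.Ioo (0 : ℝ) 1, ∀ ε ∈ Set.Ioo (0 : ℝ) ε₀,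
      1 - K * Real.sqrt ε ≤
        ‖(U ε ^ ⌊Real.pi / (2 * Real.sqrt ε)⌋₊).mulVec ψ 2‖ ^ 2 +
        ‖(U ε ^ ⌊Real.pi / (2 * Real.sqrt ε)⌋₊).mulVec ψ 3‖ ^ 2 := by
  refine ⟨9, by norm_num, 1 / 16, ⟨by norm_num, by norm_num⟩, fun ε ⟨h0, h1⟩ => ?_⟩
  have hmα := abs_floor_mul_arcsin_sqrt_sub_pi_div_two_le h0 h1.le
  set α := arcsin √ε
  set m := ⌊π / (2 * √ε)⌋₊
  have hψ₀ : ψ = walkState (√2)⁻¹ 0 0 := by simp [hψ, walkState]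
  have hα : α ≤ 2 * √ε :=
    arcsin_le_two_mul (sqrt_nonneg ε) (by rw [sq_sqrt h0.le]; linarith)
  obtain ⟨δ, ⟨hδ0, hδα⟩, hΦ⟩ :=
    groverWalk_pow_mulVec_walkState_zero α (arcsin_nonneg.2 (sqrt_nonneg ε)) (√2)⁻¹ m
  rw [hU ε ⟨h0, by linarith⟩, ← groverWalk_arcsin_sqrt h0.le (by linarith), hψ₀, hΦ,
    norm_walkState_two_sq_add_norm_walkState_three_sq]
  have hsin : ∀ x, |x - m * α| ≤ α → 1 - 9 * ε ≤ sin x ^ 2 := fun x hx => by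
    have := one_sub_sq_le_sin_sq_of_abs_sub_pi_div_two_le (x := x) (r := 3 * √ε)
      (by rw [abs_le] at hmα hx ⊢; constructor <;> linarith)
    rw [mul_pow, sq_sqrt h0.le] at this
    linarith
  have hε : ε ≤ √ε := (le_sqrt h0.le h0.le).2 (by nlinarith)
  have hc : ‖((√2)⁻¹ : ℂ)‖ ^ 2 = 1 / 2 := by simp
  rw [hc]
  linarith [hsin (m * α + δ) (by rw [abs_le]; constructor <;> linarith),
    hsin (m * α - δ) (by rw [abs_le]; constructor <;> linarith)]
end

section
/- Let φ ∈ ℝ with cos(φ/2) ≠ 0 and let ε ∈ ℂ. The quartic polynomial z⁴ − (1−2ε)·(1+e^{iφ})·z² + e^{iφ} ∈ ℂ[z] has a repeated complex root if and only if ε = 1/2 − 1/(2cos(φ/2)) or ε = 1/2 + 1/(2cos(φ/2)). (Section 5.1: for the Grover graph with detuned phase φ, the double zero of the characteristic polynomial required for pairing has not vanished but moved to ε₀ = 1/2 ± 1/(2cos(φ/2)); the branch with ε₀(0) = 0 satisfies ε₀ = 1/2 − 1/(2cos(φ/2)) = −φ²/16 + O(φ⁴).) -/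
/-!
A biquadratic `z⁴ - a z² + b` with `b ≠ 0` has a repeated root exactly when it is the square of
`z² - a/2`, i.e. when `a² = 4b`. For `a = (1 - 2ε)(1 + e^{iφ})` and `b = e^{iφ}`, the identity
`1 + e^{iφ} = 2 cos(φ/2) e^{iφ/2}` turns this into `((1 - 2ε) cos(φ/2))² = 1`.
-/

open Polynomial

section Biquadratic

variable {K : Type*} [Field K]

lemma isRoot_biquadratic_iff (a b z : K) :
    (X ^ 4 - C a * X ^ 2 + C b).IsRoot z ↔ z ^ 4 - a * z ^ 2 + b = 0 := by
  simp [IsRoot]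

lemma isRoot_derivative_biquadratic_iff (a b z : K) :
    (derivative (X ^ 4 - C a * X ^ 2 + C b)).IsRoot z ↔ 2 * z * (2 * z ^ 2 - a) = 0 := by
  simp only [IsRoot, derivative_add, derivative_sub, derivative_X_pow, derivative_C_mul,
    derivative_C, eval_add, eval_sub, eval_mul, eval_C, eval_pow, eval_X, eval_zero]
  push_cast
  constructor <;> intro h <;> linear_combination h

lemma exists_isRoot_derivative_biquadratic_iff [IsAlgClosed K] (h2 : (2 : K) ≠ 0) {a b : K}
    (hb : b ≠ 0) :
    (∃ z, (X ^ 4 - C a * X ^ 2 + C b).IsRoot z ∧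
        (derivative (X ^ 4 - C a * X ^ 2 + C b)).IsRoot z) ↔ a ^ 2 = 4 * b := by
  simp only [isRoot_biquadratic_iff, isRoot_derivative_biquadratic_iff]
  constructor
  · rintro ⟨z, hz, hz'⟩
    have hz0 : z ≠ 0 := by
      rintro rfl
      exact hb (by simpa using hz)
    have ha : 2 * z ^ 2 = a := by
      linear_combination (mul_eq_zero.mp hz').resolve_left (mul_ne_zero h2 hz0)
    linear_combination (-4 : K) * hz - (a - 2 * z ^ 2) * ha
  · intro hab
    obtain ⟨z, hz⟩ := IsAlgClosed.exists_pow_nat_eq (a / 2) two_pos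
    have ha : 2 * z ^ 2 = a := by rw [hz]; field_simp
    have hb4 : b = z ^ 4 :=
      mul_left_cancel₀ (mul_ne_zero h2 h2) (by linear_combination -hab - (a + 2 * z ^ 2) * ha)
    exact ⟨z, by linear_combination hb4 + z ^ 2 * ha, by rw [ha, sub_self, mul_zero]⟩

end Biquadratic

lemma Complex.one_add_exp_mul_I (x : ℂ) :
    1 + exp (x * I) = 2 * cos (x / 2) * exp (x / 2 * I) := by
  rw [two_cos, add_mul, ← exp_add, ← exp_add]
  ring_nf
  rw [exp_zero, add_comm]

lemma sq_one_sub_two_mul_mul_eq_one_iff {K : Type*} [Field K] (h2 : (2 : K) ≠ 0) {c : K}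
    (hc : c ≠ 0) (ε : K) :
    ((1 - 2 * ε) * c) ^ 2 = 1 ↔ ε = 1 / 2 - 1 / (2 * c) ∨ ε = 1 / 2 + 1 / (2 * c) := by
  rw [sq_eq_one_iff]
  refine or_congr ?_ ?_ <;> constructor <;> intro h
  · field_simp; linear_combination -h
  · rw [h]; field_simp; ring
  · field_simp; linear_combination -h
  · rw [h]; field_simp; ring

/-- Section 5.1: the quartic `z⁴ − (1−2ε)(1+e^{iφ})z² + e^{iφ}` (characteristic polynomial
of the detuned Grover graph) has a repeated root iff `ε = 1/2 ∓ 1/(2cos(φ/2))`. -/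
theorem stmt15 (φ : ℝ) (hφ : Real.cos (φ / 2) ≠ 0) (ε : ℂ)
    (p : Polynomial ℂ)
    (hp : p = Polynomial.X ^ 4
        - Polynomial.C ((1 - 2 * ε) * (1 + Complex.exp (φ * Complex.I))) * Polynomial.X ^ 2
        + Polynomial.C (Complex.exp (φ * Complex.I))) :
    (∃ z : ℂ, p.IsRoot z ∧ (Polynomial.derivative p).IsRoot z) ↔
      ε = 1 / 2 - 1 / (2 * ((Real.cos (φ / 2) : ℝ) : ℂ)) ∨
      ε = 1 / 2 + 1 / (2 * ((Real.cos (φ / 2) : ℝ) : ℂ)) := by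
  subst hp
  have hE : Complex.exp (φ * Complex.I) ≠ 0 := Complex.exp_ne_zero _
  have hsq : (1 + Complex.exp (φ * Complex.I)) ^ 2
      = 4 * ((Real.cos (φ / 2) : ℝ) : ℂ) ^ 2 * Complex.exp (φ * Complex.I) := by
    rw [Complex.one_add_exp_mul_I, Complex.ofReal_cos, Complex.ofReal_div, Complex.ofReal_ofNat,
      mul_pow, mul_pow, ← Complex.exp_nat_mul]
    ring_nf
  have h4E : 4 * Complex.exp (φ * Complex.I) ≠ 0 := mul_ne_zero (by norm_num) hE
  rw [exists_isRoot_derivative_biquadratic_iff two_ne_zero hE,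
    ← sq_one_sub_two_mul_mul_eq_one_iff two_ne_zero (Complex.ofReal_ne_zero.mpr hφ), mul_pow,
    hsq]
  constructor <;> intro h
  · exact mul_right_cancel₀ h4E (by linear_combination h)
  · linear_combination 4 * Complex.exp (φ * Complex.I) * h
end
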